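/- arXiv:2601.11490 — 7 statements merged into one kernel-verified Lean document; each statement's English description precedes it below -/
import Mathlib

section
/- For every integer m ≥ 3, there exist finite sets A and B of integers and an increasing sequence of positive integers h_1 < h_2 < ⋯ < h_m such that |A| = |B|, and for all i ∈ {1,…,m}: |h_i A| < |h_i B| if i is odd, and |h_i A| > |h_i B| if i is even. -/
/-!
The `h`-fold sumset of `block g = {0, 1, g}` is `{i + g j : i + j ≤ h}`: it has the full size
`T h = (h + 1)(h + 2) / 2` once `g > h`, but at most `g h + 1` elements, and never fewer than
`h + 1`. For a set `S₀ + N • S₁ + N² • S₂ + ⋯` whose digit sets have `h`-fold sumsets inside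
`[0, N)`, the size of the `h`-fold sumset is the product of those of the digits. Both `A` and `B`
have `3 ^ (k + 1)` digits `block g` for each `k < m`, with `g = scale k` ("capped") or
`g = scale m`, `A` capping the even and `B` the odd `k`. At `h = 8 · scale k ^ 2` every later
block is full on both sides, while block `k` is full on one side and loses a factor about
`(2h) ^ (-3 ^ (k + 1) / 2)` on the capped side. The earlier blocks, of total weight
`(3 ^ (k + 1) - 3) / 2`, cannot make up for this: per unit of weight they change the size by a
factor between `(h + 1) / T h` and `T h / (h + 1) = (h + 2) / 2`.
-/

/-- The `h`-fold sumset of a finite set `A` of integers: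
`hA = {a₁ + ⋯ + a_h : aᵢ ∈ A}`. -/
def finSumset (h : ℕ) (A : Finset ℤ) : Finset ℤ :=
  (Fintype.piFinset fun _ : Fin h => A).image fun f => ∑ i, f i

open Finset Pointwise

theorem finSumset_eq_nsmul (h : ℕ) (A : Finset ℤ) : finSumset h A = h • A := by
  ext x
  simp only [finSumset, mem_image, Fintype.mem_piFinset, mem_nsmul, List.sum_ofFn]
  constructor
  · rintro ⟨f, hf, rfl⟩
    exact ⟨fun i => ⟨f i, hf i⟩, rfl⟩
  · rintro ⟨f, rfl⟩
    exact ⟨fun i => f i, fun i => (f i).2, rfl⟩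

theorem eq_and_eq_of_add_mul_eq {N x x' y y' : ℤ} (hx : x ∈ Ico 0 N) (hx' : x' ∈ Ico 0 N)
    (h : x + N * y = x' + N * y') : x = x' ∧ y = y' := by
  rw [mem_Ico] at hx hx'
  have hxx' : x = x' := by
    simpa [Int.add_mul_emod_self_left, Int.emod_eq_of_lt hx.1 hx.2,
      Int.emod_eq_of_lt hx'.1 hx'.2] using congrArg (· % N) h
  subst hxx'
  exact ⟨rfl, mul_left_cancel₀ (by omega) (add_left_cancel h)⟩

theorem card_add_image_mul {N : ℤ} {X : Finset ℤ} (hX : X ⊆ Ico 0 N) (Y : Finset ℤ) :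
    #(X + Y.image (N * ·)) = #X * #Y := by
  change #(image₂ (· + ·) X (Y.image (N * ·))) = _
  rw [image₂_image_right, card_image₂_iff]
  rintro ⟨x, y⟩ hxy ⟨x', y'⟩ hxy' heq
  simp only [Set.mem_prod, mem_coe] at hxy hxy'
  obtain ⟨rfl, rfl⟩ := eq_and_eq_of_add_mul_eq (hX hxy.1) (hX hxy'.1) heq
  rfl

/-- `stack N [S₀, S₁, …] = S₀ + N • (S₁ + N • (S₂ + ⋯))`: the sets `Sₖ` are the base-`N`
digits. -/
def stack (N : ℤ) : List (Finset ℤ) → Finset ℤ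
  | [] => {0}
  | S :: L => S + (stack N L).image (N * ·)

theorem nsmul_stack (N : ℤ) (h : ℕ) (L : List (Finset ℤ)) :
    h • stack N L = stack N (L.map (h • ·)) := by
  induction L with
  | nil => exact nsmul_zero h
  | cons S L ih =>
    rw [stack, List.map_cons, stack, nsmul_add, ← ih]
    exact congrArg _ (image_nsmul (AddMonoidHom.mulLeft N) (stack N L) h).symm

theorem card_stack {N : ℤ} {L : List (Finset ℤ)} (hL : ∀ S ∈ L, S ⊆ Ico 0 N) :
    #(stack N L) = (L.map card).prod := by
  induction L with
  | nil => rfl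
  | cons S L ih =>
    rw [stack, card_add_image_mul (hL S (by simp)), ih fun T hT => hL T (by simp [hT])]
    rfl

def triangle (h : ℕ) : Finset (ℕ × ℕ) := (range (h + 1)).biUnion antidiagonal

theorem mem_triangle {h : ℕ} {p : ℕ × ℕ} : p ∈ triangle h ↔ p.1 + p.2 ≤ h := by
  simp [triangle]

theorem card_triangle (h : ℕ) : 2 * #(triangle h) = (h + 1) * (h + 2) := by
  have hdisj : (range (h + 1) : Set ℕ).PairwiseDisjoint antidiagonal :=
    fun n _ n' _ hnn' => disjoint_left.2 fun p hp hp' =>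
      hnn' ((mem_antidiagonal.1 hp).symm.trans (mem_antidiagonal.1 hp'))
  rw [triangle, card_biUnion hdisj]
  simp only [Nat.card_antidiagonal]
  clear hdisj
  induction h with
  | zero => rfl
  | succ h ih => rw [sum_range_succ, mul_add, ih]; ring

def block (g : ℕ) : Finset ℤ := {0, 1, (g : ℤ)}

theorem nsmul_block (g h : ℕ) :
    h • block g = (triangle h).image fun p => (p.1 : ℤ) + g * p.2 := by
  induction h with
  | zero => ext x; simp [mem_triangle, eq_comm]
  | succ h ih =>
    rw [succ_nsmul', ih]
    ext x
    simp only [mem_add, block, mem_insert, mem_singleton, mem_image,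
      mem_triangle, Prod.exists]
    constructor
    · rintro ⟨a, ha, _, ⟨i, j, hij, rfl⟩, rfl⟩
      rcases ha with rfl | rfl | rfl
      · exact ⟨i, j, by omega, by ring⟩
      · exact ⟨i + 1, j, by omega, by push_cast; ring⟩
      · exact ⟨i, j + 1, by omega, by push_cast; ring⟩
    · rintro ⟨i, j, hij, rfl⟩
      rcases i with _ | i
      · rcases j with _ | j
        · exact ⟨0, by simp, 0, ⟨0, 0, by omega, by simp⟩, by simp⟩
        · exact ⟨g, by simp, _, ⟨0, j, by omega, rfl⟩, by push_cast; ring⟩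
      · exact ⟨1, by simp, _, ⟨i, j, by omega, rfl⟩, by push_cast; ring⟩

theorem card_nsmul_block_le (g h : ℕ) : #(h • block g) ≤ #(triangle h) :=
  nsmul_block g h ▸ card_image_le

theorem card_nsmul_block_of_lt {g h : ℕ} (hgh : h < g) : #(h • block g) = #(triangle h) := by
  rw [nsmul_block]
  refine card_image_of_injOn fun p hp q hq hpq => ?_
  have hIco : ∀ p ∈ (triangle h : Set (ℕ × ℕ)), (p.1 : ℤ) ∈ Ico 0 (g : ℤ) := fun p hp => by
    rw [mem_coe, mem_triangle] at hp
    simp only [mem_Ico]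
    omega
  obtain ⟨h1, h2⟩ := eq_and_eq_of_add_mul_eq (hIco p hp) (hIco q hq) hpq
  exact Prod.ext (by exact_mod_cast h1) (by exact_mod_cast h2)

theorem nsmul_block_subset_Icc {g : ℕ} (hg : 1 ≤ g) (h : ℕ) :
    h • block g ⊆ Icc 0 ((g * h : ℕ) : ℤ) := by
  rw [nsmul_block]
  intro x hx
  obtain ⟨⟨i, j⟩, hij, rfl⟩ := mem_image.1 hx
  rw [mem_triangle] at hij
  rw [mem_Icc]
  constructor
  · positivity
  · have : i + g * j ≤ g * h := by nlinarith
    exact_mod_cast this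

theorem card_nsmul_block_le_mul {g : ℕ} (hg : 1 ≤ g) (h : ℕ) : #(h • block g) ≤ g * h + 1 := by
  have := card_le_card (nsmul_block_subset_Icc hg h)
  rw [Int.card_Icc] at this
  omega

theorem le_card_nsmul_block (g h : ℕ) : h + 1 ≤ #(h • block g) := by
  have hsub : (range (h + 1)).image (Nat.cast : ℕ → ℤ) ⊆ h • block g := by
    rw [nsmul_block]
    intro x hx
    obtain ⟨i, hi, rfl⟩ := mem_image.1 hx
    exact mem_image.2 ⟨(i, 0), mem_triangle.2 (by simpa [Nat.lt_succ_iff] using hi), by simp⟩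
  simpa [card_image_of_injective _ Nat.cast_injective] using card_le_card hsub

theorem card_block {g : ℕ} (hg : 2 ≤ g) : #(block g) = 3 := by
  rw [block, card_insert_of_notMem, card_pair] <;> simp <;> omega

theorem sq_card_nsmul_block_lt {g : ℕ} (hg : 1 ≤ g) :
    #((8 * g ^ 2) • block g) ^ 2 < #(triangle (8 * g ^ 2)) * (8 * g ^ 2 + 1) := by
  have hc := card_nsmul_block_le_mul hg (8 * g ^ 2)
  have hQ := card_triangle (8 * g ^ 2)
  have hpoly : 2 * (g * (8 * g ^ 2) + 1) ^ 2 < (8 * g ^ 2 + 1) ^ 2 * (8 * g ^ 2 + 2) := by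
    nlinarith [pow_pos (by omega : 0 < g) 3]
  nlinarith [Nat.pow_le_pow_left hc 2]

theorem two_mul_sum_pow_three_add_three (i : ℕ) :
    2 * ∑ j ∈ range i, 3 ^ (j + 1) + 3 = 3 ^ (i + 1) := by
  induction i with
  | zero => rfl
  | succ i ih => rw [sum_range_succ, pow_succ 3 (i + 1), ← ih]; ring

theorem prod_pow_three_lt {L Q i : ℕ} {c d : ℕ → ℕ} (hLQ : L ≤ Q)
    (hc : ∀ j < i, c j ≤ Q) (hd : ∀ j < i, L ≤ d j) (hci : c i ^ 2 < Q * L) (hdi : d i = Q) :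
    ∏ j ∈ range (i + 1), c j ^ 3 ^ (j + 1) < ∏ j ∈ range (i + 1), d j ^ 3 ^ (j + 1) := by
  set W := ∑ j ∈ range i, 3 ^ (j + 1)
  have hW : 3 ^ (i + 1) = 2 * W + 3 := (two_mul_sum_pow_three_add_three i).symm
  have hPc : ∏ j ∈ range i, c j ^ 3 ^ (j + 1) ≤ Q ^ W := by
    rw [← prod_pow_eq_pow_sum]
    exact prod_le_prod' fun j hj => Nat.pow_le_pow_left (hc j (mem_range.1 hj)) _
  have hPd : L ^ W ≤ ∏ j ∈ range i, d j ^ 3 ^ (j + 1) := by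
    rw [← prod_pow_eq_pow_sum]
    exact prod_le_prod' fun j hj => Nat.pow_le_pow_left (hd j (mem_range.1 hj)) _
  have hQL : 0 < Q * L := (Nat.zero_le _).trans_lt hci
  have hQ : 0 < Q := Nat.pos_of_ne_zero (by rintro rfl; simp at hQL)
  have hcQ : c i < Q := lt_of_pow_lt_pow_left₀ 2 (Nat.zero_le _)
    (hci.trans_le (by nlinarith))
  rw [prod_range_succ, prod_range_succ, hdi, hW]
  calc (∏ j ∈ range i, c j ^ 3 ^ (j + 1)) * c i ^ (2 * W + 3)
      ≤ Q ^ W * c i ^ (2 * W + 3) := Nat.mul_le_mul_right _ hPc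
    _ = (Q * c i ^ 2) ^ W * c i ^ 3 := by ring
    _ < (Q * (Q * L)) ^ W * Q ^ 3 := by
      apply Nat.mul_lt_mul_of_le_of_lt (Nat.pow_le_pow_left (by nlinarith) _)
        (Nat.pow_lt_pow_left hcQ (by norm_num)) (pow_pos (Nat.mul_pos hQ hQL) W)
    _ = L ^ W * Q ^ (2 * W + 3) := by ring
    _ ≤ (∏ j ∈ range i, d j ^ 3 ^ (j + 1)) * Q ^ (2 * W + 3) := Nat.mul_le_mul_right _ hPd

def scale : ℕ → ℕ
  | 0 => 2
  | k + 1 => 8 * scale k ^ 2 + 1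

theorem two_le_scale (k : ℕ) : 2 ≤ scale k := by
  induction k with
  | zero => exact le_rfl
  | succ k ih => simp only [scale]; nlinarith

theorem strictMono_scale : StrictMono scale :=
  strictMono_nat_of_lt_succ fun k => by
    have := two_le_scale k
    simp only [scale]
    nlinarith

def blocks (s : ℕ → ℕ) : ℕ → List (Finset ℤ)
  | 0 => []
  | m + 1 => blocks s m ++ List.replicate (3 ^ (m + 1)) (block (s m))

theorem exists_eq_block_of_mem_blocks {s : ℕ → ℕ} {m : ℕ} {S : Finset ℤ} (hS : S ∈ blocks s m) :
    ∃ k < m, S = block (s k) := by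
  induction m with
  | zero => simp [blocks] at hS
  | succ m ih =>
    rcases List.mem_append.1 hS with hS | hS
    · obtain ⟨k, hk, rfl⟩ := ih hS
      exact ⟨k, by omega, rfl⟩
    · exact ⟨m, by omega, List.eq_of_mem_replicate hS⟩

theorem prod_map_blocks (f : Finset ℤ → ℕ) (s : ℕ → ℕ) (m : ℕ) :
    ((blocks s m).map f).prod = ∏ k ∈ range m, f (block (s k)) ^ 3 ^ (k + 1) := by
  induction m with
  | zero => rfl
  | succ m ih =>
    rw [blocks, List.map_append, List.prod_append, ih, List.map_replicate, List.prod_replicate,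
      prod_range_succ]

def cappedScale (P : ℕ → Prop) [DecidablePred P] (m k : ℕ) : ℕ :=
  if P k then scale k else scale m

section Witness

variable {P : ℕ → Prop} [DecidablePred P] {m : ℕ}

theorem two_le_cappedScale (k : ℕ) : 2 ≤ cappedScale P m k := by
  unfold cappedScale; split <;> exact two_le_scale _

theorem cappedScale_le {k : ℕ} (hk : k ≤ m) : cappedScale P m k ≤ scale m := by
  unfold cappedScale; split
  · exact strictMono_scale.monotone hk
  · exact le_rfl

theorem scale_succ_le_cappedScale {k j : ℕ} (hkj : k < j) (hjm : j ≤ m) :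
    scale (k + 1) ≤ cappedScale P m j := by
  unfold cappedScale; split <;> exact strictMono_scale.monotone (by omega)

variable (P m) in
def witness : Finset ℤ :=
  stack ((scale m ^ 2 : ℕ) : ℤ) (blocks (cappedScale P m) m)

theorem card_nsmul_witness {h : ℕ} (hh : h < scale m) :
    #(h • witness P m) = ∏ k ∈ range m, #(h • block (cappedScale P m k)) ^ 3 ^ (k + 1) := by
  rw [witness, nsmul_stack, card_stack, List.map_map]
  · exact prod_map_blocks _ _ _
  intro S hS
  obtain ⟨T, hT, rfl⟩ := List.mem_map.1 hS
  obtain ⟨k, hk, rfl⟩ := exists_eq_block_of_mem_blocks hT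
  have hg := cappedScale_le (P := P) hk.le
  refine (nsmul_block_subset_Icc (by linarith [two_le_cappedScale (P := P) (m := m) k]) h).trans
    fun x hx => ?_
  rw [mem_Icc] at hx
  rw [mem_Ico]
  have : cappedScale P m k * h < scale m ^ 2 := by nlinarith
  omega

variable (P m) in
theorem card_witness : #(witness P m) = ∏ k ∈ range m, 3 ^ 3 ^ (k + 1) := by
  have := card_nsmul_witness (P := P) (m := m) (h := 1) (by linarith [two_le_scale m])
  simpa [card_block (two_le_cappedScale _)] using this

theorem card_nsmul_witness_lt {P' : ℕ → Prop} [DecidablePred P'] {k : ℕ} (hk : k < m)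
    (hP : P k) (hP' : ¬P' k) :
    #((8 * scale k ^ 2) • witness P m) < #((8 * scale k ^ 2) • witness P' m) := by
  set h := 8 * scale k ^ 2
  have hh : h < scale m := strictMono_scale.monotone hk
  have hfull : ∀ {Q : ℕ → Prop} [DecidablePred Q] {j}, k < j → j ≤ m →
      #(h • block (cappedScale Q m j)) = #(triangle h) := fun hkj hjm =>
    card_nsmul_block_of_lt ((Nat.lt_succ_self h).trans_le (scale_succ_le_cappedScale hkj hjm))
  have htail : ∏ j ∈ Ico (k + 1) m, #(h • block (cappedScale P m j)) ^ 3 ^ (j + 1) =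
      ∏ j ∈ Ico (k + 1) m, #(h • block (cappedScale P' m j)) ^ 3 ^ (j + 1) :=
    prod_congr rfl fun j hj => by
      rw [hfull (mem_Ico.1 hj).1 (mem_Ico.1 hj).2.le, hfull (mem_Ico.1 hj).1 (mem_Ico.1 hj).2.le]
  rw [card_nsmul_witness hh, card_nsmul_witness hh, ← prod_range_mul_prod_Ico _ hk,
    ← prod_range_mul_prod_Ico _ hk, htail]
  refine Nat.mul_lt_mul_of_pos_right ?_ (prod_pos fun j _ => pow_pos ?_ _)
  · apply prod_pow_three_lt (L := h + 1) (Q := #(triangle h))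
    · nlinarith [card_triangle h]
    · exact fun j _ => card_nsmul_block_le _ h
    · exact fun j _ => le_card_nsmul_block _ h
    · rw [cappedScale, if_pos hP]
      exact sq_card_nsmul_block_lt (by linarith [two_le_scale k])
    · rw [cappedScale, if_neg hP']
      exact card_nsmul_block_of_lt hh
  · exact (Nat.succ_pos h).trans_le (le_card_nsmul_block _ h)

end Witness

theorem peringuey_deRoton_general (m : ℕ) :
    ∃ (A B : Finset ℤ) (h : ℕ → ℕ),
      (∀ i, 1 ≤ i → i ≤ m → 0 < h i) ∧
      (∀ i, 1 ≤ i → i < m → h i < h (i + 1)) ∧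
      A.card = B.card ∧
      (∀ i, 1 ≤ i → i ≤ m →
        (Odd i → (finSumset (h i) A).card < (finSumset (h i) B).card) ∧
        (Even i → (finSumset (h i) B).card < (finSumset (h i) A).card)) := by
  refine ⟨witness Even m, witness Odd m, fun i => 8 * scale (i - 1) ^ 2,
    fun i _ _ => by nlinarith [two_le_scale (i - 1)], fun i hi _ => ?_,
    by rw [card_witness, card_witness], fun i hi him => ⟨fun hodd => ?_, fun heven => ?_⟩⟩
  · simp only [Nat.add_sub_cancel]
    gcongr
    exact strictMono_scale (by omega)
  · have hk : Even (i - 1) := Nat.Odd.sub_odd hodd odd_one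
    rw [finSumset_eq_nsmul, finSumset_eq_nsmul]
    exact card_nsmul_witness_lt (by omega) hk (Nat.not_odd_iff_even.2 hk)
  · have hk : Odd (i - 1) := Nat.Even.sub_odd hi heven odd_one
    rw [finSumset_eq_nsmul, finSumset_eq_nsmul]
    exact card_nsmul_witness_lt (by omega) hk (Nat.not_even_iff_odd.2 hk)

/-- For every integer `m ≥ 3`, there exist finite sets `A` and `B` of integers and an
increasing sequence of positive integers `h 1 < h 2 < ⋯ < h m` such that `|A| = |B|`,
and for all `i ∈ {1,…,m}`: `|hᵢA| < |hᵢB|` if `i` is odd, and `|hᵢA| > |hᵢB|` if `i`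
is even. -/
theorem peringuey_deRoton (m : ℕ) (hm : 3 ≤ m) :
    ∃ (A B : Finset ℤ) (h : ℕ → ℕ),
      (∀ i, 1 ≤ i → i ≤ m → 0 < h i) ∧
      (∀ i, 1 ≤ i → i < m → h i < h (i + 1)) ∧
      A.card = B.card ∧
      (∀ i, 1 ≤ i → i ≤ m →
        (Odd i → (finSumset (h i) A).card < (finSumset (h i) B).card) ∧
        (Even i → (finSumset (h i) B).card < (finSumset (h i) A).card)) :=
  peringuey_deRoton_general m
end

section
/- For all integers n ≥ 2 and H ≥ 2, and for any integers m_{i,h} given for all i = 1,…,n−1 and h = 1,…,H, there exist finite sets of integers A_1,…,A_n such that |hA_i| − |hA_{i+1}| = m_{i,h} for all i = 1,…,n−1 and h = 1,…,H. -/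
open Finset Pointwise

section IntervalUnion

variable {C : Finset ℤ} {K : ℤ}

theorem nonneg_of_mem_nsmul (hC : ∀ c ∈ C, 0 ≤ c) {h : ℕ} {e : ℤ} (he : e ∈ h • C) :
    0 ≤ e := by
  induction h generalizing e with
  | zero => simp_all
  | succ h ih =>
    rw [succ_nsmul', mem_add] at he
    obtain ⟨c, hc, v, hv, rfl⟩ := he
    exact add_nonneg (hC c hc) (ih hv)

theorem nsmul_union_Icc (hC : ∀ c ∈ C, 0 ≤ c ∧ c ≤ K) (h0 : 0 ∈ C) {h : ℕ} (hh : 1 ≤ h) :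
    h • (C ∪ Icc (K + 1) (2 * K + 1)) =
      {e ∈ h • C | e ≤ K} ∪ Icc (K + 1) (h * (2 * K + 1)) := by
  have hK : 0 ≤ K := (hC 0 h0).2
  have hnn : ∀ {h : ℕ} {e : ℤ}, e ∈ h • C → 0 ≤ e :=
    nonneg_of_mem_nsmul fun c hc => (hC c hc).1
  induction h, hh using Nat.le_induction with
  | base =>
    rw [one_nsmul, one_nsmul, filter_true_of_mem fun c hc => (hC c hc).2, Nat.cast_one, one_mul]
  | succ h hh ih =>
    have hP : 2 * K + 1 ≤ h * (2 * K + 1) :=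
      le_mul_of_one_le_left (by omega) (by exact_mod_cast hh)
    have hsucc : ((h + 1 : ℕ) : ℤ) * (2 * K + 1) = h * (2 * K + 1) + (2 * K + 1) := by
      push_cast; ring
    rw [succ_nsmul', ih, hsucc]
    ext z
    simp only [mem_add, mem_union, mem_filter, mem_Icc, succ_nsmul' C h]
    constructor
    · rintro ⟨a, ha | ha, b, hb | hb, rfl⟩
      · by_cases hab : a + b ≤ K
        · exact Or.inl ⟨⟨a, ha, b, hb.1, rfl⟩, hab⟩
        · have := hC a ha; right; constructor <;> linarith
      · have := hC a ha; right; constructor <;> linarith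
      · have := hnn hb.1; right; constructor <;> linarith
      · right; constructor <;> linarith
    · rintro (⟨⟨c, hc, v, hv, rfl⟩, hcv⟩ | hz)
      · have := hC c hc
        exact ⟨c, Or.inl hc, v, Or.inl ⟨hv, by linarith⟩, rfl⟩
      · by_cases h1 : z ≤ h * (2 * K + 1)
        · exact ⟨0, Or.inl h0, z, Or.inr ⟨hz.1, h1⟩, zero_add z⟩
        by_cases h2 : K + 1 ≤ z - h * (2 * K + 1)
        · exact ⟨z - h * (2 * K + 1), Or.inr ⟨h2, by linarith⟩, h * (2 * K + 1),
            Or.inr ⟨by linarith, le_rfl⟩, by ring⟩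
        · exact ⟨K + 1, Or.inr ⟨le_rfl, by linarith⟩, z - (K + 1),
            Or.inr ⟨by linarith, by linarith⟩, by ring⟩

theorem card_nsmul_union_Icc (hC : ∀ c ∈ C, 0 ≤ c ∧ c ≤ K) (h0 : 0 ∈ C) {h : ℕ}
    (hh : 1 ≤ h) :
    (#(h • (C ∪ Icc (K + 1) (2 * K + 1))) : ℤ) =
      #{e ∈ h • C | e ≤ K} + h * (2 * K + 1) - K := by
  have hK : 0 ≤ K := (hC 0 h0).2
  have hP : 2 * K + 1 ≤ h * (2 * K + 1) :=
    le_mul_of_one_le_left (by omega) (by exact_mod_cast hh)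
  rw [nsmul_union_Icc hC h0 hh, card_union_of_disjoint, Int.card_Icc, Nat.cast_add,
    Int.toNat_of_nonneg (by linarith)]
  · ring
  · exact disjoint_left.2 fun e he he' => by
      linarith [(mem_filter.1 he).2, (mem_Icc.1 he').1]

end IntervalUnion

section TruncatedSumset

variable {μ K : ℤ} {G : Finset ℤ}

theorem mem_nsmul_insert_insert_and_le_iff (hμ : 0 ≤ μ) (hG : ∀ g ∈ G, 0 ≤ g)
    (hGG : ∀ g ∈ G, ∀ g' ∈ G, K < g + g') (h : ℕ) (z : ℤ) :
    z ∈ h • insert 0 (insert μ G) ∧ z ≤ K ↔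
      z ≤ K ∧ ((∃ a ≤ h, z = a * μ) ∨ ∃ g ∈ G, ∃ a < h, z = g + a * μ) := by
  induction h generalizing z with
  | zero => simp [and_comm]
  | succ h ih =>
    have hsucc (a : ℕ) : ((a + 1 : ℕ) : ℤ) * μ = μ + a * μ := by push_cast; ring
    rw [succ_nsmul', mem_add]
    refine ⟨?_, ?_⟩
    · rintro ⟨⟨c, hc, v, hv, rfl⟩, hle⟩
      refine ⟨hle, ?_⟩
      rw [mem_insert, mem_insert] at hc
      rcases hc with rfl | rfl | hc
      · obtain ⟨-, ⟨a, ha, rfl⟩ | ⟨g, hg, a, ha, rfl⟩⟩ := (ih v).1 ⟨hv, by linarith⟩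
        · exact Or.inl ⟨a, by omega, zero_add _⟩
        · exact Or.inr ⟨g, hg, a, by omega, zero_add _⟩
      · obtain ⟨-, ⟨a, ha, rfl⟩ | ⟨g, hg, a, ha, rfl⟩⟩ := (ih v).1 ⟨hv, by linarith⟩
        · exact Or.inl ⟨a + 1, by omega, (hsucc a).symm⟩
        · exact Or.inr ⟨g, hg, a + 1, by omega, by rw [hsucc]; ring⟩
      · obtain ⟨-, ⟨a, ha, rfl⟩ | ⟨g, hg, a, ha, rfl⟩⟩ :=
          (ih v).1 ⟨hv, by linarith [hG c hc]⟩
        · exact Or.inr ⟨c, hc, a, by omega, rfl⟩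
        · have : 0 ≤ (a : ℤ) * μ := by positivity
          linarith [hGG c hc g hg]
    · rintro ⟨hle, ⟨_ | a, ha, rfl⟩ | ⟨g, hg, _ | a, ha, rfl⟩⟩
      · exact ⟨⟨0, mem_insert_self _ _, 0, zero_mem_nsmul (mem_insert_self _ _), by simp⟩, hle⟩
      · rw [hsucc] at hle ⊢
        exact ⟨⟨μ, by simp, a * μ,
          ((ih _).2 ⟨by linarith, Or.inl ⟨a, by omega, rfl⟩⟩).1, rfl⟩, hle⟩
      · exact ⟨⟨g, by simp [hg], 0, zero_mem_nsmul (mem_insert_self _ _), by simp⟩, hle⟩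
      · rw [hsucc] at hle ⊢
        exact ⟨⟨μ, by simp, g + a * μ,
          ((ih _).2 ⟨by linarith, Or.inr ⟨g, hg, a, by omega, rfl⟩⟩).1, by ring⟩, hle⟩

theorem card_filter_le_nsmul_insert_insert (hμ : 0 < μ) (hG : ∀ g ∈ G, 0 < g)
    (hGG : ∀ g ∈ G, ∀ g' ∈ G, K < g + g') (hres : Set.InjOn (· % μ) ↑(insert 0 G))
    {h : ℕ} (hhK : h * μ ≤ K) :
    #{e ∈ h • insert 0 (insert μ G) | e ≤ K} =
      h + 1 + ∑ g ∈ G, #{a ∈ range h | g + (a : ℕ) * μ ≤ K} := by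
  have hμ0 : μ ≠ 0 := hμ.ne'
  have hemod (g : ℤ) (a : ℕ) : (g + a * μ) % μ = g % μ := Int.add_mul_emod_self_right g a μ
  have hset : {e ∈ h • insert 0 (insert μ G) | e ≤ K} =
      (range (h + 1)).image (fun a : ℕ => (a : ℤ) * μ) ∪ G.biUnion fun g =>
        {a ∈ range h | g + (a : ℕ) * μ ≤ K}.image fun a : ℕ => g + a * μ := by
    ext z
    rw [mem_filter, mem_nsmul_insert_insert_and_le_iff hμ.le (fun g hg => (hG g hg).le) hGG]
    simp only [mem_union, mem_image, mem_biUnion, mem_filter, mem_range, Nat.lt_succ_iff]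
    constructor
    · rintro ⟨hle, ⟨a, ha, rfl⟩ | ⟨g, hg, a, ha, rfl⟩⟩
      exacts [Or.inl ⟨a, ha, rfl⟩, Or.inr ⟨g, hg, a, ⟨ha, hle⟩, rfl⟩]
    · rintro (⟨a, ha, rfl⟩ | ⟨g, hg, a, ⟨ha, hle⟩, rfl⟩)
      · refine ⟨le_trans ?_ hhK, Or.inl ⟨a, ha, rfl⟩⟩
        exact mul_le_mul_of_nonneg_right (by exact_mod_cast ha) hμ.le
      · exact ⟨hle, Or.inr ⟨g, hg, a, ha, rfl⟩⟩
  have hmulμ : Function.Injective fun a : ℕ => (a : ℤ) * μ := fun a b hab =>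
    by exact_mod_cast mul_right_cancel₀ hμ0 hab
  rw [hset, card_union_of_disjoint, card_image_of_injective _ hmulμ, card_range, card_biUnion]
  · congr 1
    refine sum_congr rfl fun g _ => card_image_of_injective _ ?_
    exact fun a b hab => hmulμ (add_left_cancel hab)
  · intro g hg g' hg' hne
    simp only [Function.onFun, disjoint_left, mem_image]
    rintro _ ⟨a, -, rfl⟩ ⟨a', -, he⟩
    refine hne (hres (mem_coe.2 (mem_insert_of_mem hg))
      (mem_coe.2 (mem_insert_of_mem hg')) ?_)
    simpa only [hemod] using congrArg (· % μ) he.symm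
  · simp only [disjoint_left, mem_image, mem_biUnion]
    rintro _ ⟨a, -, rfl⟩ ⟨g, hg, a', -, he⟩
    have h0g : (0 : ℤ) = g := hres (mem_coe.2 (mem_insert_self _ _))
      (mem_coe.2 (mem_insert_of_mem hg)) (by simpa [hemod, Int.mul_emod_left] using congrArg (· % μ) he.symm)
    exact (hG g hg).ne h0g

end TruncatedSumset

namespace FoxKravitzZhang

variable (H X : ℕ)

def modulus : ℤ := (H + 1) * (X + 1)

def cap : ℤ := 2 * (H + 1) * modulus H X

def residue (t i : ℕ) : ℤ := t + (H + 1) * i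

def generator (t i : ℕ) : ℤ := cap H X - t * modulus H X + residue H t i

def generators (x : ℕ → ℕ) : Finset ℤ :=
  ((Icc 1 H).sigma fun t => range (x t)).image fun p => generator H X p.1 p.2

def core (x : ℕ → ℕ) : Finset ℤ := insert 0 (insert (modulus H X) (generators H X x))

noncomputable def levelSet (x : ℕ → ℕ) : Finset ℤ :=
  core H X x ∪ Icc (cap H X + 1) (2 * cap H X + 1)

variable {H X} {t i : ℕ}

theorem modulus_pos : 0 < modulus H X := by unfold modulus; positivity

theorem residue_pos (ht : 1 ≤ t) : 0 < residue H t i :=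
  Int.add_pos_of_pos_of_nonneg (by exact_mod_cast ht) (by positivity)

theorem residue_lt_modulus (ht : t ≤ H) (hi : i ≤ X) : residue H t i < modulus H X := by
  have ht' : (t : ℤ) ≤ H := by exact_mod_cast ht
  have hi' : ((H : ℤ) + 1) * i ≤ (H + 1) * X := by gcongr
  unfold residue modulus; linarith

theorem eq_and_eq_of_residue_eq {t' i' : ℕ} (ht : t ≤ H) (ht' : t' ≤ H)
    (he : residue H t i = residue H t' i') : t = t' ∧ i = i' := by
  have he : t + (H + 1) * i = t' + (H + 1) * i' := by unfold residue at he; exact_mod_cast he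
  have htt : t = t' := by
    simpa [Nat.add_mul_mod_self_left, Nat.mod_eq_of_lt, Nat.lt_succ_of_le, ht, ht']
      using congrArg (· % (H + 1)) he
  subst htt
  exact ⟨rfl, Nat.eq_of_mul_eq_mul_left H.succ_pos (Nat.add_left_cancel he)⟩

theorem generator_emod (ht : t ≤ H) (hi : i ≤ X) :
    generator H X t i % modulus H X = residue H t i := by
  rw [show generator H X t i = residue H t i + (2 * (H + 1) - t) * modulus H X by
    unfold generator cap; ring, Int.add_mul_emod_self_right,
    Int.emod_eq_of_lt (by unfold residue; positivity) (residue_lt_modulus ht hi)]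

theorem generator_add_mul_le_cap_iff (ht : 1 ≤ t) (htH : t ≤ H) (hi : i ≤ X) (a : ℕ) :
    generator H X t i + a * modulus H X ≤ cap H X ↔ a < t := by
  have hρ := residue_pos (H := H) (i := i) ht
  have hρμ := residue_lt_modulus htH hi
  have hμ := modulus_pos (H := H) (X := X)
  unfold generator
  constructor
  · intro hle
    by_contra! hta
    have : (t : ℤ) * modulus H X ≤ a * modulus H X := by gcongr
    linarith
  · intro hat
    have : ((a : ℤ) + 1) * modulus H X ≤ t * modulus H X := by gcongr; exact_mod_cast hat
    linarith

theorem generator_le_cap (ht : 1 ≤ t) (htH : t ≤ H) (hi : i ≤ X) :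
    generator H X t i ≤ cap H X := by
  simpa using (generator_add_mul_le_cap_iff ht htH hi 0).2 ht

theorem cap_lt_two_mul_generator (ht : 1 ≤ t) (htH : t ≤ H) :
    cap H X < 2 * generator H X t i := by
  have hμ := modulus_pos (H := H) (X := X)
  have : (t : ℤ) * modulus H X ≤ H * modulus H X := by gcongr
  have := residue_pos (H := H) (i := i) ht
  unfold generator cap; nlinarith

variable {x : ℕ → ℕ}

theorem exists_eq_generator_of_mem_generators (hx : ∀ t ∈ Icc 1 H, x t ≤ X) {g : ℤ}
    (hg : g ∈ generators H X x) :
    ∃ t i, 1 ≤ t ∧ t ≤ H ∧ i ≤ X ∧ g = generator H X t i := by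
  obtain ⟨⟨t, i⟩, hp, rfl⟩ := mem_image.1 hg
  rw [mem_sigma, mem_Icc, mem_range] at hp
  exact ⟨t, i, hp.1.1, hp.1.2, (hp.2.trans_le (hx t (mem_Icc.2 hp.1))).le, rfl⟩

theorem emod_injOn_generators (hx : ∀ t ∈ Icc 1 H, x t ≤ X) :
    Set.InjOn (· % modulus H X) ↑(insert 0 (generators H X x)) := by
  have key : ∀ g ∈ generators H X x, ∃ t i, 1 ≤ t ∧ t ≤ H ∧ g = generator H X t i ∧
      g % modulus H X = residue H t i := by
    intro g hg
    obtain ⟨t, i, ht, htH, hi, rfl⟩ := exists_eq_generator_of_mem_generators hx hg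
    exact ⟨t, i, ht, htH, rfl, generator_emod htH hi⟩
  intro g hg g' hg' he
  simp only [coe_insert, Set.mem_insert_iff, mem_coe] at hg hg'
  rcases hg with rfl | hg <;> rcases hg' with rfl | hg'
  · rfl
  · obtain ⟨t, i, ht, -, -, hr⟩ := key g' hg'
    simp only [Int.zero_emod, hr] at he
    exact absurd he (residue_pos ht).ne
  · obtain ⟨t, i, ht, -, -, hr⟩ := key g hg
    simp only [Int.zero_emod, hr] at he
    exact absurd he (residue_pos ht).ne'
  · obtain ⟨t, i, -, htH, rfl, hr⟩ := key g hg
    obtain ⟨t', i', -, htH', rfl, hr'⟩ := key g' hg'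
    simp only [hr, hr'] at he
    obtain ⟨rfl, rfl⟩ := eq_and_eq_of_residue_eq htH htH' he
    rfl

theorem generator_injOn (hx : ∀ t ∈ Icc 1 H, x t ≤ X) :
    Set.InjOn (fun p : (_ : ℕ) × ℕ => generator H X p.1 p.2)
      ↑((Icc 1 H).sigma fun t => range (x t)) := by
  rintro ⟨t, i⟩ hp ⟨t', i'⟩ hp' he
  simp only [coe_sigma, Set.mem_sigma_iff, coe_Icc, Set.mem_Icc, coe_range, Set.mem_Iio] at hp hp'
  have hr := congrArg (· % modulus H X) he
  simp only [generator_emod hp.1.2 (hp.2.trans_le (hx t (mem_Icc.2 hp.1))).le,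
    generator_emod hp'.1.2 (hp'.2.trans_le (hx t' (mem_Icc.2 hp'.1))).le] at hr
  obtain ⟨rfl, rfl⟩ := eq_and_eq_of_residue_eq hp.1.2 hp'.1.2 hr
  rfl

theorem card_filter_nsmul_core (hx : ∀ t ∈ Icc 1 H, x t ≤ X) {h : ℕ} (hh : h ≤ H) :
    #{e ∈ h • core H X x | e ≤ cap H X} = h + 1 + ∑ t ∈ Icc 1 H, x t * min h t := by
  have hμ := modulus_pos (H := H) (X := X)
  have hK : 0 < cap H X := by unfold cap; positivity
  have hG : ∀ g ∈ generators H X x, cap H X < 2 * g := fun g hg => by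
    obtain ⟨t, i, ht, htH, -, rfl⟩ := exists_eq_generator_of_mem_generators hx hg
    exact cap_lt_two_mul_generator ht htH
  have hhK : h * modulus H X ≤ cap H X := by
    have : (h : ℤ) ≤ H := by exact_mod_cast hh
    unfold cap; nlinarith
  rw [core, card_filter_le_nsmul_insert_insert hμ (fun g hg => by linarith [hG g hg])
    (fun g hg g' hg' => by linarith [hG g hg, hG g' hg']) (emod_injOn_generators hx) hhK,
    generators, sum_image (generator_injOn hx), sum_sigma]
  congr 1
  refine sum_congr rfl fun t ht => ?_
  rw [mem_Icc] at ht
  have hfilter : ∀ i ∈ range (x t),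
      #{a ∈ range h | generator H X t i + (a : ℕ) * modulus H X ≤ cap H X} = min h t := by
    intro i hi
    have hi : i ≤ X := ((mem_range.1 hi).trans_le (hx t (mem_Icc.2 ht))).le
    rw [← card_range (min h t)]
    congr 1
    ext a
    simp only [mem_filter, mem_range, generator_add_mul_le_cap_iff ht.1 ht.2 hi]
    omega
  rw [sum_congr rfl hfilter, sum_const, card_range, smul_eq_mul]

theorem card_nsmul_levelSet (hx : ∀ t ∈ Icc 1 H, x t ≤ X) {h : ℕ} (h1 : 1 ≤ h)
    (hh : h ≤ H) :
    (#(h • levelSet H X x) : ℤ) =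
      h * (2 * cap H X + 2) - cap H X + 1 + ∑ t ∈ Icc 1 H, (x t * min h t : ℕ) := by
  have hμ := modulus_pos (H := H) (X := X)
  have hC : ∀ c ∈ core H X x, 0 ≤ c ∧ c ≤ cap H X := by
    intro c hc
    rw [core, mem_insert, mem_insert] at hc
    rcases hc with rfl | rfl | hc
    · exact ⟨le_rfl, by unfold cap; positivity⟩
    · exact ⟨hμ.le, by unfold cap; nlinarith⟩
    · obtain ⟨t, i, ht, htH, hi, rfl⟩ := exists_eq_generator_of_mem_generators hx hc
      have : 0 < cap H X := by unfold cap; positivity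
      exact ⟨by linarith [cap_lt_two_mul_generator (X := X) (i := i) ht htH],
        generator_le_cap ht htH hi⟩
  rw [levelSet, card_nsmul_union_Icc hC (mem_insert_self _ _) h1,
    card_filter_nsmul_core hx hh]
  push_cast
  ring

end FoxKravitzZhang

theorem sum_secondDiff_mul_min (f : ℕ → ℤ) (hf : f 0 = 0) {H h : ℕ} (hh : h ≤ H) :
    ∑ t ∈ Icc 1 H, (2 * f t - f (t - 1) - f (min (t + 1) H)) * (min h t : ℕ) = f h := by
  induction h with
  | zero => simp [hf]
  | succ h ih =>
    have hmin (t : ℕ) :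
        ((min (h + 1) t : ℕ) : ℤ) = (min h t : ℕ) + if h + 1 ≤ t then 1 else 0 := by
      split_ifs <;> omega
    have htail : {t ∈ Icc 1 H | h + 1 ≤ t} = Icc (h + 1) H := by
      ext t; simp only [mem_filter, mem_Icc]; omega
    set g : ℕ → ℤ := fun s => f (s - 1) - f (min s H)
    have hg : ∀ t ∈ Icc (h + 1) H,
        2 * f t - f (t - 1) - f (min (t + 1) H) = g (t + 1) - g t := fun t ht => by
      rw [mem_Icc] at ht
      simp only [g, Nat.add_sub_cancel, min_eq_left ht.2]; ring
    simp only [hmin, mul_add, mul_ite, mul_one, mul_zero, sum_add_distrib]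
    rw [ih (by omega), ← sum_filter, htail, sum_congr rfl hg, sum_Icc_sub (by omega)]
    simp only [g, Nat.add_sub_cancel, min_eq_left hh, min_eq_right H.le_succ]
    ring

theorem exists_sum_mul_min_eq (f : ℕ → ℤ) (H : ℕ) :
    ∃ v : ℕ → ℤ, ∀ h ∈ Icc 1 H, ∑ t ∈ Icc 1 H, v t * (min h t : ℕ) = f h := by
  let f₀ := Function.update f 0 0
  refine ⟨fun t => 2 * f₀ t - f₀ (t - 1) - f₀ (min (t + 1) H), fun h hh => ?_⟩
  rw [mem_Icc] at hh
  exact (sum_secondDiff_mul_min f₀ (Function.update_self ..) hh.2).trans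
    (Function.update_of_ne (by omega) _ _)

theorem abs_sum_Ico_le (v : ℕ → ℤ) (i n : ℕ) : |∑ j ∈ Ico i n, v j| ≤ ∑ j ∈ range n, |v j| :=
  (abs_sum_le_sum_abs _ _).trans <| sum_le_sum_of_subset_of_nonneg
    (fun _ hj => mem_range.2 (mem_Ico.1 hj).2) fun _ _ _ => abs_nonneg _

theorem exists_nat_sub_eq (v : ℕ → ℕ → ℤ) (n : ℕ) (T : Finset ℕ) :
    ∃ X : ℕ, ∃ x : ℕ → ℕ → ℕ, (∀ i, ∀ t ∈ T, x i t ≤ X) ∧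
      ∀ i < n, ∀ t ∈ T, (x i t : ℤ) - x (i + 1) t = v i t := by
  set B : ℤ := ∑ t ∈ T, ∑ j ∈ range n, |v j t|
  have hB : ∀ i, ∀ t ∈ T, |∑ j ∈ Ico i n, v j t| ≤ B := fun i t ht =>
    (abs_sum_Ico_le (v · t) i n).trans
      (single_le_sum (f := fun t => ∑ j ∈ range n, |v j t|) (fun _ _ => by positivity) ht)
  have hx : ∀ i, ∀ t ∈ T, ((B + ∑ j ∈ Ico i n, v j t).toNat : ℤ) = B + ∑ j ∈ Ico i n, v j t :=
    fun i t ht => Int.toNat_of_nonneg (by linarith [abs_le.1 (hB i t ht)])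
  refine ⟨(2 * B).toNat, fun i t => (B + ∑ j ∈ Ico i n, v j t).toNat,
    fun i t ht => by dsimp only; have := abs_le.1 (hB i t ht); omega, fun i hi t ht => ?_⟩
  rw [hx i t ht, hx (i + 1) t ht, sum_eq_sum_Ico_succ_bot hi]
  ring

theorem fox_kravitz_zhang_general (n H : ℕ)
    (m : ℕ → ℕ → ℤ) :
    ∃ A : ℕ → Finset ℤ,
      ∀ i, 1 ≤ i → i ≤ n - 1 → ∀ h, 1 ≤ h → h ≤ H →
        ((finSumset h (A i)).card : ℤ) - ((finSumset h (A (i + 1))).card : ℤ) = m i h := by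
  choose v hv using fun j => exists_sum_mul_min_eq (m j) H
  obtain ⟨X, x, hxX, hx⟩ := exists_nat_sub_eq v n (Icc 1 H)
  refine ⟨fun i => FoxKravitzZhang.levelSet H X (x i), fun i hi hin h h1 hhH => ?_⟩
  rw [finSumset_eq_nsmul, finSumset_eq_nsmul,
    FoxKravitzZhang.card_nsmul_levelSet (hxX i) h1 hhH,
    FoxKravitzZhang.card_nsmul_levelSet (hxX (i + 1)) h1 hhH, ← hv i h (mem_Icc.2 ⟨h1, hhH⟩)]
  push_cast
  rw [add_sub_add_left_eq_sub, ← sum_sub_distrib]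
  exact sum_congr rfl fun t ht => by rw [← sub_mul, hx i (by omega) t ht]

/-- (Fox–Kravitz–Zhang) For all integers `n ≥ 2` and `H ≥ 2`, and for any integers
`m i h` given for all `i = 1,…,n−1` and `h = 1,…,H`, there exist finite sets of
integers `A 1, …, A n` such that `|hAᵢ| − |hA_{i+1}| = m i h` for all `i = 1,…,n−1`
and `h = 1,…,H`. -/
theorem fox_kravitz_zhang (n H : ℕ) (hn : 2 ≤ n) (hH : 2 ≤ H)
    (m : ℕ → ℕ → ℤ) :
    ∃ A : ℕ → Finset ℤ,
      ∀ i, 1 ≤ i → i ≤ n - 1 → ∀ h, 1 ≤ h → h ≤ H →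
        ((finSumset h (A i)).card : ℤ) - ((finSumset h (A (i + 1))).card : ℤ) = m i h :=
  fox_kravitz_zhang_general n H m
end

section
/- Let ε be a real number with 0 < ε ≤ 1/3 and let X = [0, 1−ε] ∪ [2, 3−ε] ⊆ ℝ. Then for every integer h ≥ 3, the h-fold sumset satisfies hX = [0, h(3−ε)]. -/
/-! Taking `k` summands near `2` and `h - k` summands near `0` shows that `hX` contains the
interval `[2k, 2k + h(1 - ε)]`.  Consecutive such intervals overlap as soon as their length
`h(1 - ε)` is at least the gap `2`, which is where `ε ≤ 1/3` and `h ≥ 3` enter; for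
`k = 0, …, h` they then cover `[0, h(3 - ε)]`. -/

/-- The `h`-fold sumset of a subset `A` of `ℝ`:
`hA = {a₁ + ⋯ + a_h : aᵢ ∈ A}`. -/
def sumset (h : ℕ) (A : Set ℝ) : Set ℝ :=
  {x | ∃ f : Fin h → ℝ, (∀ i, f i ∈ A) ∧ ∑ i, f i = x}

open Set Finset

lemma sumset_subset_Icc {A : Set ℝ} {a b : ℝ} (hA : A ⊆ Icc a b) (h : ℕ) :
    sumset h A ⊆ Icc (h * a) (h * b) := by
  rintro _ ⟨f, hf, rfl⟩
  constructor
  · simpa using card_nsmul_le_sum univ f a fun i _ => (hA (hf i)).1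
  · simpa using sum_le_card_nsmul univ f b fun i _ => (hA (hf i)).2

lemma sum_fin_ite_val_lt (d : ℝ) {k h : ℕ} (hk : k ≤ h) :
    ∑ i : Fin h, (if (i : ℕ) < k then d else 0) = k * d := by
  rw [sum_ite, sum_const_zero, add_zero, sum_const, Fin.card_filter_val_lt, min_eq_right hk,
    nsmul_eq_mul]

lemma nat_mul_add_mem_sumset {L d t : ℝ} {k h : ℕ} (hh : 0 < h) (hk : k ≤ h)
    (ht : t ∈ Icc 0 (h * L)) : k * d + t ∈ sumset h (Icc 0 L ∪ Icc d (d + L)) := by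
  have hh' : (0 : ℝ) < h := Nat.cast_pos.2 hh
  have hth : t / h ∈ Icc 0 L :=
    ⟨div_nonneg ht.1 hh'.le, (div_le_iff₀ hh').2 (by linarith [ht.2])⟩
  refine ⟨fun i => (if (i : ℕ) < k then d else 0) + t / h, fun i => ?_, ?_⟩
  · by_cases hi : (i : ℕ) < k
    · exact Or.inr ⟨by simp [hi, hth.1], by simp [hi, hth.2]⟩
    · simpa [hi] using Or.inl hth
  · have hsum : ∑ _i : Fin h, t / h = t := by
      rw [sum_const, card_univ, Fintype.card_fin, nsmul_eq_mul, mul_div_cancel₀ _ hh'.ne']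
    rw [sum_add_distrib, sum_fin_ite_val_lt d hk, hsum]

lemma exists_nat_mul_le_le_add {L d x : ℝ} {h : ℕ} (hd : 0 < d) (hdL : d ≤ h * L)
    (hx : x ∈ Icc 0 (h * (d + L))) : ∃ k ≤ h, k * d ≤ x ∧ x ≤ k * d + h * L := by
  rcases le_or_gt (h * d) x with hhx | hxh
  · exact ⟨h, le_rfl, hhx, by linarith [hx.2]⟩
  · have hxd : 0 ≤ x / d := div_nonneg hx.1 hd.le
    refine ⟨⌊x / d⌋₊, (Nat.floor_lt hxd).2 ((div_lt_iff₀ hd).2 hxh) |>.le, ?_, ?_⟩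
    · exact (le_div_iff₀ hd).1 (Nat.floor_le hxd)
    · have := (div_lt_iff₀ hd).1 (Nat.lt_floor_add_one (x / d))
      linarith

theorem sumset_Icc_union_Icc {L d : ℝ} {h : ℕ} (hd : 0 < d) (hdL : d ≤ h * L) :
    sumset h (Icc 0 L ∪ Icc d (d + L)) = Icc 0 (h * (d + L)) := by
  have hh : 0 < h := Nat.pos_of_ne_zero fun h0 => by simp [h0] at hdL; linarith
  apply Set.Subset.antisymm
  · have hsub : Icc 0 L ∪ Icc d (d + L) ⊆ Icc 0 (d + L) :=
      union_subset (Icc_subset_Icc_right (by linarith)) (Icc_subset_Icc_left hd.le)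
    simpa using sumset_subset_Icc hsub h
  · intro x hx
    obtain ⟨k, hk, hkx, hxk⟩ := exists_nat_mul_le_le_add hd hdL hx
    simpa using nat_mul_add_mem_sumset (d := d) hh hk ⟨sub_nonneg.2 hkx, by linarith⟩

theorem sumset_of_two_intervals_general (ε : ℝ) (hε : ε ≤ 1 / 3)
    (X : Set ℝ) (hX : X = Set.Icc 0 (1 - ε) ∪ Set.Icc 2 (3 - ε))
    (h : ℕ) (hh : 3 ≤ h) :
    sumset h X = Set.Icc 0 (h * (3 - ε)) := by
  have hgap : (2 : ℝ) ≤ h * (1 - ε) := by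
    have : (3 : ℝ) ≤ h := by exact_mod_cast hh
    nlinarith
  have hthree : (3 : ℝ) - ε = 2 + (1 - ε) := by ring
  rw [hX, hthree]
  exact sumset_Icc_union_Icc two_pos hgap

/-- Let `0 < ε ≤ 1/3` and `X = [0, 1−ε] ∪ [2, 3−ε] ⊆ ℝ`.  Then for every integer
`h ≥ 3`, the `h`-fold sumset satisfies `hX = [0, h(3−ε)]`. -/
theorem sumset_of_two_intervals (ε : ℝ) (hε0 : 0 < ε) (hε : ε ≤ 1 / 3)
    (X : Set ℝ) (hX : X = Set.Icc 0 (1 - ε) ∪ Set.Icc 2 (3 - ε))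
    (h : ℕ) (hh : 3 ≤ h) :
    sumset h X = Set.Icc 0 (h * (3 - ε)) :=
  sumset_of_two_intervals_general ε hε X hX h hh
end

section
/- Let ε be a real number with 0 < ε ≤ 1/3, let X = [0, 1−ε] ∪ [2, 3−ε] ⊆ ℝ, and let Y be a nonempty subset of the interval [1+ε, 2−2ε]. Then the 2-fold sumset satisfies 2(X ∪ Y) = [0, 2(3−ε)]. -/
open Set
open scoped Pointwise

lemma sumset_two_eq_add (A : Set ℝ) : sumset 2 A = A + A := by
  ext x
  constructor
  · rintro ⟨f, hf, rfl⟩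
    rw [Fin.sum_univ_two]
    exact add_mem_add (hf 0) (hf 1)
  · rintro ⟨a, ha, b, hb, rfl⟩
    exact ⟨![a, b], fun i => by fin_cases i <;> assumption, by simp [Fin.sum_univ_two]⟩

namespace Set

variable {α : Type*} [AddCommGroup α] [LinearOrder α] [IsOrderedAddMonoid α]

lemma Icc_subset_Icc_add_Icc {a b c d p q : α} (hab : a ≤ b) (hcd : c ≤ d)
    (hp : a + c ≤ p) (hq : q ≤ b + d) : Icc p q ⊆ Icc a b + Icc c d := by
  rintro t ⟨htp, htq⟩
  refine ⟨max a (t - d), ⟨le_max_left _ _, max_le hab ?_⟩, t - max a (t - d), ⟨?_, ?_⟩,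
    add_sub_cancel _ _⟩
  · rw [sub_le_iff_le_add]; exact htq.trans hq
  · rcases max_choice a (t - d) with h | h <;> rw [h]
    · rw [le_sub_iff_add_le']; exact hp.trans htp
    · rwa [sub_sub_cancel]
  · rw [sub_le_comm]; exact le_max_right _ _

end Set

lemma Icc_zero_subset_add_self {ε y : ℝ} {A : Set ℝ} (hε0 : 0 < ε) (hy₁ : 1 + ε ≤ y)
    (hy₂ : y ≤ 2 - 2 * ε) (hI : Icc 0 (1 - ε) ⊆ A) (hJ : Icc 2 (3 - ε) ⊆ A) (hy : y ∈ A) :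
    Icc 0 (2 * (3 - ε)) ⊆ A + A := by
  have hY : Icc y y ⊆ A := by rwa [Icc_self, singleton_subset_iff]
  have cover : Icc 0 (2 * (3 - ε)) =
      Icc 0 (2 - 2 * ε) ∪ Icc (2 - 2 * ε) 2 ∪ Icc 2 (4 - 2 * ε) ∪ Icc (4 - 2 * ε) 4 ∪
        Icc 4 (2 * (3 - ε)) := by
    rw [Icc_union_Icc_eq_Icc, Icc_union_Icc_eq_Icc, Icc_union_Icc_eq_Icc, Icc_union_Icc_eq_Icc]
    all_goals linarith
  rw [cover]
  refine union_subset (union_subset (union_subset (union_subset ?_ ?_) ?_) ?_) ?_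
  · exact (Icc_subset_Icc_add_Icc (by linarith) (by linarith) (by linarith) (by linarith)).trans
      (add_subset_add hI hI)
  · exact (Icc_subset_Icc_add_Icc le_rfl (by linarith) (by linarith) (by linarith)).trans
      (add_subset_add hY hI)
  · exact (Icc_subset_Icc_add_Icc (by linarith) (by linarith) (by linarith) (by linarith)).trans
      (add_subset_add hJ hI)
  · exact (Icc_subset_Icc_add_Icc le_rfl (by linarith) (by linarith) (by linarith)).trans
      (add_subset_add hY hJ)
  · exact (Icc_subset_Icc_add_Icc (by linarith) (by linarith) (by linarith) (by linarith)).trans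
      (add_subset_add hJ hJ)

theorem two_fold_sumset_general (ε : ℝ) (hε0 : 0 < ε)
    (X : Set ℝ) (hX : X = Set.Icc 0 (1 - ε) ∪ Set.Icc 2 (3 - ε))
    (Y : Set ℝ) (hY : Y ⊆ Set.Icc (1 + ε) (2 - 2 * ε)) (hYne : Y.Nonempty) :
    sumset 2 (X ∪ Y) = Set.Icc 0 (2 * (3 - ε)) := by
  obtain ⟨y, hy⟩ := hYne
  obtain ⟨hy₁, hy₂⟩ := hY hy
  rw [sumset_two_eq_add]
  refine Subset.antisymm ?_ ?_
  · have hbound : X ∪ Y ⊆ Icc 0 (3 - ε) := by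
      rw [hX]
      refine union_subset (union_subset ?_ ?_) (hY.trans ?_) <;>
        exact Icc_subset_Icc (by linarith) (by linarith)
    calc X ∪ Y + (X ∪ Y) ⊆ Icc 0 (3 - ε) + Icc 0 (3 - ε) := add_subset_add hbound hbound
      _ ⊆ Icc (0 + 0) (3 - ε + (3 - ε)) := Icc_add_Icc_subset _ _ _ _
      _ = Icc 0 (2 * (3 - ε)) := by rw [add_zero, two_mul]
  · refine Icc_zero_subset_add_self hε0 hy₁ hy₂ ?_ ?_ (Or.inr hy) <;> rw [hX]
    · exact subset_union_left.trans subset_union_left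
    · exact subset_union_right.trans subset_union_left

/-- Let `0 < ε ≤ 1/3`, let `X = [0, 1−ε] ∪ [2, 3−ε] ⊆ ℝ`, and let `Y` be a nonempty
subset of `[1+ε, 2−2ε]`.  Then the 2-fold sumset satisfies
`2(X ∪ Y) = [0, 2(3−ε)]`. -/
theorem two_fold_sumset (ε : ℝ) (hε0 : 0 < ε) (hε : ε ≤ 1 / 3)
    (X : Set ℝ) (hX : X = Set.Icc 0 (1 - ε) ∪ Set.Icc 2 (3 - ε))
    (Y : Set ℝ) (hY : Y ⊆ Set.Icc (1 + ε) (2 - 2 * ε)) (hYne : Y.Nonempty) :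
    sumset 2 (X ∪ Y) = Set.Icc 0 (2 * (3 - ε)) :=
  two_fold_sumset_general ε hε0 X hX Y hY hYne
end

section
/- Let ε be a real number with 0 < ε ≤ 1/3 and let X = [0, 1−ε] ∪ [2, 3−ε] ⊆ ℝ. Then for every positive integer h, the h-fold sumset satisfies hX = ⋃_{k=0}^{h} [2h − 2k, h(3−ε) − 2k]; in particular, 2X = [0, 2−2ε] ∪ [2, 4−2ε] ∪ [4, 6−2ε]. -/
open Pointwise

lemma sumset_one (A : Set ℝ) : sumset 1 A = A := by
  ext x
  constructor
  · rintro ⟨f, hf, rfl⟩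
    simpa using hf 0
  · intro hx
    exact ⟨fun _ => x, fun _ => hx, by simp⟩

lemma sumset_succ (h : ℕ) (A : Set ℝ) : sumset (h + 1) A = sumset h A + A := by
  ext x
  constructor
  · rintro ⟨f, hf, rfl⟩
    refine ⟨∑ i : Fin h, f i.castSucc, ⟨fun i => f i.castSucc, fun i => hf _, rfl⟩,
      f (Fin.last h), hf _, ?_⟩
    rw [Fin.sum_univ_castSucc]
  · rintro ⟨a, ⟨f, hf, rfl⟩, b, hb, rfl⟩
    refine ⟨Fin.snoc f b, ?_, ?_⟩
    · intro i
      refine Fin.lastCases ?_ ?_ i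
      · simpa using hb
      · intro j; simpa using hf j
    · rw [Fin.sum_univ_castSucc]; simp

lemma Icc_add_Icc_eq {a b c d : ℝ} (hab : a ≤ b) (hcd : c ≤ d) :
    Set.Icc a b + Set.Icc c d = Set.Icc (a + c) (b + d) := by
  refine le_antisymm (Set.Icc_add_Icc_subset a b c d) ?_
  rintro x ⟨hx1, hx2⟩
  refine ⟨min b (x - c), ⟨le_min (by linarith) (by linarith), min_le_left _ _⟩,
    x - min b (x - c), ⟨?_, ?_⟩, by ring⟩
  · have := min_le_right b (x - c); linarith
  · have : x - d ≤ min b (x - c) := le_min (by linarith) (by linarith)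
    linarith

/-- Let `0 < ε ≤ 1/3` and `X = [0, 1−ε] ∪ [2, 3−ε] ⊆ ℝ`.  Then for every positive
integer `h`, the `h`-fold sumset satisfies
`hX = ⋃_{k=0}^{h} [2h − 2k, h(3−ε) − 2k]`; in particular,
`2X = [0, 2−2ε] ∪ [2, 4−2ε] ∪ [4, 6−2ε]`. -/
theorem sumset_union_of_intervals (ε : ℝ) (hε0 : 0 < ε) (hε : ε ≤ 1 / 3)
    (X : Set ℝ) (hX : X = Set.Icc 0 (1 - ε) ∪ Set.Icc 2 (3 - ε)) :
    (∀ h : ℕ, 1 ≤ h →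
      sumset h X =
        ⋃ k ∈ Finset.range (h + 1),
          Set.Icc (2 * (h : ℝ) - 2 * (k : ℝ)) ((h : ℝ) * (3 - ε) - 2 * (k : ℝ))) ∧
    sumset 2 X =
      Set.Icc 0 (2 - 2 * ε) ∪ Set.Icc 2 (4 - 2 * ε) ∪ Set.Icc 4 (6 - 2 * ε) := by
  have hε1 : ε ≤ 1 := by linarith
  have main : ∀ h : ℕ, 1 ≤ h →
      sumset h X =
        ⋃ k ∈ Finset.range (h + 1),
          Set.Icc (2 * (h : ℝ) - 2 * (k : ℝ)) ((h : ℝ) * (3 - ε) - 2 * (k : ℝ)) := by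
    intro h hh
    induction h with
    | zero => omega
    | succ n ih =>
      rcases Nat.eq_or_lt_of_le hh with h1 | h1
      · -- n + 1 = 1, i.e. n = 0
        have hn : n = 0 := by omega
        subst hn
        rw [sumset_one, hX]
        ext x
        constructor
        · intro hx
          simp only [Set.mem_iUnion, Finset.mem_range, Set.mem_Icc, exists_prop]
          rcases hx with ⟨ha1, ha2⟩ | ⟨ha1, ha2⟩
          · exact ⟨1, by norm_num, by push_cast; constructor <;> linarith⟩
          · exact ⟨0, by norm_num, by push_cast; constructor <;> linarith⟩
        · intro hx
          simp only [Set.mem_iUnion, Finset.mem_range, Set.mem_Icc, exists_prop] at hx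
          obtain ⟨k, hk, ha1, ha2⟩ := hx
          interval_cases k <;> norm_num at ha1 ha2 ⊢
          · right; exact ⟨by linarith, by linarith⟩
          · left; exact ⟨by linarith, by linarith⟩
      · have hn : 1 ≤ n := by omega
        have ihn := ih hn
        rw [sumset_succ, ihn, hX]
        ext x
        simp only [Set.mem_add, Set.mem_iUnion, Set.mem_union, Finset.mem_range,
          Set.mem_Icc, exists_prop]
        constructor
        · rintro ⟨a, ⟨k, hk, ha1, ha2⟩, b, hb, rfl⟩
          rcases hb with ⟨hb1, hb2⟩ | ⟨hb1, hb2⟩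
          · refine ⟨k + 1, by omega, ?_, ?_⟩ <;> push_cast <;> push_cast at ha1 ha2 <;>
              linarith
          · refine ⟨k, by omega, ?_, ?_⟩ <;> push_cast <;> push_cast at ha1 ha2 <;>
              linarith
        · rintro ⟨k, hk, hx1, hx2⟩
          have hnε : (0:ℝ) ≤ (n:ℝ) * (1 - ε) := by
            apply mul_nonneg (Nat.cast_nonneg n); linarith
          rcases Nat.lt_or_ge k (n + 1) with hkn | hkn
          · -- x ∈ S_k + [2, 3 - ε]
            have hmem : x ∈ Set.Icc (2 * (n:ℝ) - 2 * (k:ℝ)) ((n:ℝ) * (3 - ε) - 2 * (k:ℝ))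
                + Set.Icc (2:ℝ) (3 - ε) := by
              rw [Icc_add_Icc_eq (by linarith) (by linarith)]
              push_cast at hx1 hx2
              exact ⟨by linarith, by linarith⟩
            rcases hmem with ⟨a, ha, b, hb, rfl⟩
            exact ⟨a, ⟨k, hkn, ha.1, ha.2⟩, b, Or.inr ⟨hb.1, hb.2⟩, rfl⟩
          · -- k = n + 1, x ∈ S_n + [0, 1 - ε]
            have hk' : k = n + 1 := by omega
            subst hk'
            have hmem : x ∈ Set.Icc (2 * (n:ℝ) - 2 * (n:ℝ)) ((n:ℝ) * (3 - ε) - 2 * (n:ℝ))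
                + Set.Icc (0:ℝ) (1 - ε) := by
              rw [Icc_add_Icc_eq (by linarith) (by linarith)]
              push_cast at hx1 hx2
              exact ⟨by linarith, by linarith⟩
            rcases hmem with ⟨a, ha, b, hb, rfl⟩
            exact ⟨a, ⟨n, by omega, ha.1, ha.2⟩, b, Or.inl ⟨hb.1, hb.2⟩, rfl⟩
  refine ⟨main, ?_⟩
  rw [main 2 (by norm_num)]
  ext x
  simp only [Set.mem_iUnion, Finset.mem_range, Set.mem_Icc, Set.mem_union, exists_prop]
  constructor
  · rintro ⟨k, hk, h1, h2⟩
    interval_cases k <;> push_cast at h1 h2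
    · right; exact ⟨by linarith, by linarith⟩
    · left; right; exact ⟨by linarith, by linarith⟩
    · left; left; exact ⟨by linarith, by linarith⟩
  · rintro ((⟨h1, h2⟩ | ⟨h1, h2⟩) | ⟨h1, h2⟩)
    · exact ⟨2, by norm_num, by push_cast; constructor <;> linarith⟩
    · exact ⟨1, by norm_num, by push_cast; constructor <;> linarith⟩
    · exact ⟨0, by norm_num, by push_cast; constructor <;> linarith⟩
end

section
/- Let H ≥ 2 be an integer and let ε, δ, c be real numbers with 0 < ε < 1/3, 0 < δ < ε/(H−1), and (H−1)δ + 3 < c. Let X = [0, 1−ε] ∪ [2, 3−ε] ⊆ ℝ, let n ≥ 1 be an integer, and for each j = 1,…,n let Y_j be a nonempty Lebesgue-measurable subset of [1+ε, 2−2ε]. Define A_j = [0, δ] ∪ (c + (X ∪ Y_j)). Then for all integers h with 1 ≤ h ≤ H and all j, k ∈ {1,…,n}, μ(hA_j) − μ(hA_k) = μ([0, (h−1)δ] + Y_j) − μ([0, (h−1)δ] + Y_k). -/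
open MeasureTheory Pointwise

/-!
Write `A = I ∪ (c + Z)` with `I = [0, δ]` and `Z = X ∪ Y`, and sort the summands of an element
of `hA` by how many of them come from `c + Z`: this writes `hA` as the union of the sets
`(h - k) I + k (c + Z)`, `0 ≤ k ≤ h`. For `k ≥ 2` the set `k Z` is the whole interval
`[0, k (3 - ε)]`, because any point of `Y` bridges the gaps of `X + X`; so only the piece `k = 1`,
through `c + ([0, (h - 1) δ] + Y)`, depends on `Y`. All other pieces form a compact set `B`, and
`δ < ε / (H - 1)` and `c > 3` keep `c + ([0, (h - 1) δ] + Y)` disjoint from `B`. Hence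
`μ(hA) = μ([0, (h - 1) δ] + Y) + μ(B)` with `B` independent of `Y`.
-/

open Set

namespace Set

variable {α : Type*} [AddCommMonoid α]

theorem nsmul_union_eq_biUnion (s t : Set α) (n : ℕ) :
    n • (s ∪ t) = ⋃ k ≤ n, (n - k) • s + k • t := by
  refine subset_antisymm ?_ (iUnion₂_subset fun k hk => ?_)
  · induction n with
    | zero => simp
    | succ n ih =>
      rw [succ_nsmul]
      rintro _ ⟨x, hx, y, hy, rfl⟩
      obtain ⟨k, hk, a, ha, b, hb, rfl⟩ := mem_iUnion₂.1 (ih hx)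
      rcases hy with hy | hy
      · refine mem_iUnion₂.2 ⟨k, hk.trans n.le_succ, ?_⟩
        rw [Nat.sub_add_comm hk, succ_nsmul]
        exact ⟨a + y, add_mem_add ha hy, b, hb, add_right_comm _ _ _⟩
      · refine mem_iUnion₂.2 ⟨k + 1, Nat.succ_le_succ hk, ?_⟩
        rw [Nat.add_sub_add_right, succ_nsmul]
        exact ⟨a, ha, b + y, add_mem_add hb hy, (add_assoc _ _ _).symm⟩
  · calc (n - k) • s + k • t ⊆ (n - k) • (s ∪ t) + k • (s ∪ t) :=
          add_subset_add (nsmul_subset_nsmul_left subset_union_left)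
            (nsmul_subset_nsmul_left subset_union_right)
      _ = n • (s ∪ t) := by rw [← add_nsmul, Nat.sub_add_cancel hk]

-- The set `B` of the proof sketch, for `s = I`, `t = c + X` and `v = c + [0, 3 - ε]`.
def nsmulUnionRest (s t v : Set α) (n : ℕ) : Set α :=
  (n + 1) • s ∪ (n • s + t) ∪ ⋃ k ∈ Finset.Icc 2 (n + 1), (n + 1 - k) • s + k • v

theorem succ_nsmul_union_union {s t u v : Set α} (htuv : ∀ k, 2 ≤ k → k • (t ∪ u) = k • v)
    (n : ℕ) : (n + 1) • (s ∪ (t ∪ u)) = (n • s + u) ∪ nsmulUnionRest s t v n := by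
  rw [nsmul_union_eq_biUnion, nsmulUnionRest]
  ext x
  simp only [mem_union, mem_iUnion, exists_prop, Finset.mem_Icc]
  constructor
  · rintro ⟨k, hk, hx⟩
    match k, hk with
    | 0, _ => exact Or.inr (Or.inl (Or.inl (by simpa using hx)))
    | 1, _ =>
      rw [one_nsmul, add_union, Nat.add_sub_cancel, mem_union] at hx
      tauto
    | k + 2, hk => exact Or.inr (Or.inr ⟨k + 2, ⟨le_add_self, hk⟩, by rwa [← htuv _ le_add_self]⟩)
  · rintro (hx | (hx | hx) | ⟨k, ⟨hk2, hkn⟩, hx⟩)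
    · exact ⟨1, by omega, by rw [one_nsmul, add_union, Nat.add_sub_cancel]; exact Or.inr hx⟩
    · exact ⟨0, by omega, by simp [hx]⟩
    · exact ⟨1, by omega, by rw [one_nsmul, add_union, Nat.add_sub_cancel]; exact Or.inl hx⟩
    · exact ⟨k, hkn, by rwa [htuv k hk2]⟩

end Set

theorem IsCompact.nsmul {α : Type*} [AddMonoid α] [TopologicalSpace α] [ContinuousAdd α]
    {s : Set α} (hs : IsCompact s) (n : ℕ) : IsCompact (n • s) := by
  induction n with
  | zero => simp
  | succ n ih => rw [succ_nsmul]; exact ih.add hs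

theorem isCompact_nsmulUnionRest {α : Type*} [AddCommMonoid α] [TopologicalSpace α]
    [ContinuousAdd α] {s t v : Set α} (hs : IsCompact s) (ht : IsCompact t) (hv : IsCompact v)
    (n : ℕ) : IsCompact (nsmulUnionRest s t v n) :=
  ((hs.nsmul _).union ((hs.nsmul n).add ht)).union
    (Finset.isCompact_biUnion _ fun k _ => (hs.nsmul _).add (hv.nsmul k))

theorem Set.nsmul_Icc {α : Type*} [AddCommMonoid α] [LinearOrder α] [IsOrderedAddMonoid α]
    [AddLeftReflectLE α] [ExistsAddOfLE α] {a b : α} (hab : a ≤ b) (n : ℕ) :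
    n • Icc a b = Icc (n • a) (n • b) := by
  induction n with
  | zero => simp [singleton_zero]
  | succ n ih =>
    rw [succ_nsmul, ih, Icc_add_Icc (nsmul_le_nsmul_right hab n) hab, succ_nsmul, succ_nsmul]

theorem sumset_eq_nsmul (h : ℕ) (A : Set ℝ) : sumset h A = h • A := by
  ext x
  rw [mem_nsmul]
  constructor
  · rintro ⟨f, hf, rfl⟩
    exact ⟨fun i => ⟨f i, hf i⟩, by simp [List.sum_ofFn]⟩
  · rintro ⟨f, rfl⟩
    exact ⟨fun i => f i, fun i => (f i).2, by simp [List.sum_ofFn]⟩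

theorem Icc_subset_two_nsmul_union_singleton {ε y : ℝ} (hy : y ∈ Icc (1 + ε) (2 - 2 * ε)) :
    Icc (0 : ℝ) (2 • (3 - ε)) ⊆ 2 • (Icc 0 (1 - ε) ∪ Icc 2 (3 - ε) ∪ {y}) := by
  obtain ⟨hy₁, hy₂⟩ := hy
  rintro w ⟨hw₀, hw₁⟩
  rw [nsmul_eq_mul, Nat.cast_ofNat] at hw₁
  have mem : ∀ a b, a ∈ Icc 0 (1 - ε) ∪ Icc 2 (3 - ε) ∪ {y} →
      b ∈ Icc 0 (1 - ε) ∪ Icc 2 (3 - ε) ∪ {y} → a + b = w →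
      w ∈ 2 • (Icc 0 (1 - ε) ∪ Icc 2 (3 - ε) ∪ {y}) := fun a b ha hb hab => by
    rw [two_nsmul]; exact ⟨a, ha, b, hb, hab⟩
  have low : ∀ a, 0 ≤ a → a ≤ 1 - ε → a ∈ Icc 0 (1 - ε) ∪ Icc 2 (3 - ε) ∪ {y} :=
    fun a h₀ h₁ => Or.inl (Or.inl ⟨h₀, h₁⟩)
  have high : ∀ a, 2 ≤ a → a ≤ 3 - ε → a ∈ Icc 0 (1 - ε) ∪ Icc 2 (3 - ε) ∪ {y} :=
    fun a h₀ h₁ => Or.inl (Or.inr ⟨h₀, h₁⟩)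
  have hyK : y ∈ Icc 0 (1 - ε) ∪ Icc 2 (3 - ε) ∪ {y} := Or.inr rfl
  rcases le_or_gt w (2 - 2 * ε) with h₁ | h₁
  · exact mem _ _ (low (w / 2) (by linarith) (by linarith)) (low _ (by linarith) (by linarith))
      (add_halves w)
  rcases lt_or_ge w 2 with h₂ | h₂
  · exact mem _ _ hyK (low (w - y) (by linarith) (by linarith)) (by ring)
  rcases le_or_gt w (3 - ε) with h₃ | h₃
  · exact mem _ _ (low (w - 2) (by linarith) (by linarith)) (high 2 le_rfl (by linarith)) (by ring)
  rcases le_or_gt w (4 - 2 * ε) with h₄ | h₄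
  · exact mem _ _ (low (w - (3 - ε)) (by linarith) (by linarith))
      (high (3 - ε) (by linarith) le_rfl) (by ring)
  rcases lt_or_ge w 4 with h₅ | h₅
  · exact mem _ _ hyK (high (w - y) (by linarith) (by linarith)) (by ring)
  · exact mem _ _ (high (w / 2) (by linarith) (by linarith)) (high _ (by linarith) (by linarith))
      (add_halves w)

theorem Icc_subset_nsmul_union_singleton {ε y : ℝ} (hy : y ∈ Icc (1 + ε) (2 - 2 * ε)) {k : ℕ}
    (hk : 2 ≤ k) :
    Icc (0 : ℝ) (k • (3 - ε)) ⊆ k • (Icc 0 (1 - ε) ∪ Icc 2 (3 - ε) ∪ {y}) := by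
  have hε : ε ≤ 1 / 3 := by linarith [hy.1, hy.2]
  induction k, hk using Nat.le_induction with
  | base => exact Icc_subset_two_nsmul_union_singleton hy
  | succ k hk ih =>
    have hkL : 2 • (3 - ε) ≤ k • (3 - ε) := nsmul_le_nsmul_left (by linarith) hk
    rw [nsmul_eq_mul, Nat.cast_ofNat] at hkL
    calc Icc (0 : ℝ) ((k + 1) • (3 - ε))
        = Icc 0 (k • (3 - ε)) + (Icc 0 (1 - ε) ∪ Icc 2 (3 - ε)) := by
          rw [add_union, Icc_add_Icc (by linarith) (by linarith),
            Icc_add_Icc (by linarith) (by linarith), Icc_union_Icc' (by linarith) (by linarith),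
            succ_nsmul]
          congr 1 <;> simp
      _ ⊆ k • (Icc 0 (1 - ε) ∪ Icc 2 (3 - ε) ∪ {y}) + (Icc 0 (1 - ε) ∪ Icc 2 (3 - ε) ∪ {y}) :=
          add_subset_add ih subset_union_left
      _ = (k + 1) • (Icc 0 (1 - ε) ∪ Icc 2 (3 - ε) ∪ {y}) := (succ_nsmul _ _).symm

theorem nsmul_union_eq_nsmul_Icc {ε : ℝ} {Y : Set ℝ} (hε : 0 ≤ ε)
    (hY : Y ⊆ Icc (1 + ε) (2 - 2 * ε)) (hYne : Y.Nonempty) {k : ℕ} (hk : 2 ≤ k) :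
    k • (Icc 0 (1 - ε) ∪ Icc 2 (3 - ε) ∪ Y) = k • Icc (0 : ℝ) (3 - ε) := by
  obtain ⟨y, hy⟩ := hYne
  have hε' : ε ≤ 1 / 3 := by linarith [(hY hy).1, (hY hy).2]
  apply subset_antisymm
  · refine nsmul_subset_nsmul_left (union_subset (union_subset ?_ ?_) (hY.trans ?_)) <;>
      exact Icc_subset_Icc (by linarith) (by linarith)
  · rw [nsmul_Icc (by linarith), nsmul_zero]
    exact (Icc_subset_nsmul_union_singleton (hY hy) hk).trans
      (nsmul_subset_nsmul_left (union_subset_union_right _ (singleton_subset_iff.2 hy)))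

theorem disjoint_nsmulUnionRest {ε δ c : ℝ} {Y : Set ℝ} {n : ℕ} (hδ : 0 ≤ δ)
    (hnδ : (n + 1) * δ < 2 * ε) (hc : 2 < c) (hY : Y ⊆ Icc (1 + ε) (2 - 2 * ε)) :
    Disjoint ({c} + (Icc 0 (n * δ) + Y))
      (nsmulUnionRest (Icc 0 δ) ({c} + (Icc 0 (1 - ε) ∪ Icc 2 (3 - ε))) ({c} + Icc 0 (3 - ε))
        n) := by
  rw [Set.disjoint_left]
  rintro _ ⟨_, rfl, _, ⟨u, ⟨hu₀, hu₁⟩, y, hy, rfl⟩, rfl⟩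
  obtain ⟨hy₀, hy₁⟩ := hY hy
  have hnδ' : n * δ < 2 * ε := by linarith
  have hL : (0 : ℝ) ≤ 3 - ε := by linarith
  simp only [nsmulUnionRest, mem_union, mem_iUnion₂, nsmul_Icc hδ, nsmul_Icc hL, nsmul_add,
    nsmul_singleton, nsmul_zero, not_or, not_exists]
  refine ⟨⟨?_, ?_⟩, ?_⟩
  · rintro ⟨-, h⟩
    push_cast [nsmul_eq_mul] at h
    linarith
  · rintro ⟨u', ⟨hu'₀, hu'₁⟩, _, ⟨_, rfl, x, hx, rfl⟩, he⟩
    simp only [nsmul_eq_mul] at hu'₁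
    rcases hx with ⟨hx₀, hx₁⟩ | ⟨hx₀, hx₁⟩ <;> linarith
  · rintro k hk ⟨u', ⟨hu'₀, -⟩, _, ⟨_, rfl, z, ⟨hz₀, -⟩, rfl⟩, he⟩
    have hk2 : (2 : ℝ) ≤ k := by exact_mod_cast (Finset.mem_Icc.1 hk).1
    rw [nsmul_eq_mul] at he
    nlinarith

theorem measureReal_sumset_eq_add {ε δ c : ℝ} {Y : Set ℝ} {n : ℕ} (hδ : 0 ≤ δ)
    (hnδ : (n + 1) * δ < 2 * ε) (hc : 2 < c) (hY : Y ⊆ Icc (1 + ε) (2 - 2 * ε))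
    (hYne : Y.Nonempty) :
    volume.real (sumset (n + 1) (Icc 0 δ ∪ ((c + ·) '' (Icc 0 (1 - ε) ∪ Icc 2 (3 - ε) ∪ Y))))
      = volume.real (Icc 0 (n * δ) + Y) + volume.real (nsmulUnionRest (Icc 0 δ)
          ({c} + (Icc 0 (1 - ε) ∪ Icc 2 (3 - ε))) ({c} + Icc 0 (3 - ε)) n) := by
  have hε : 0 ≤ ε := by nlinarith
  have hB : IsCompact (nsmulUnionRest (Icc 0 δ)
      ({c} + (Icc 0 (1 - ε) ∪ Icc 2 (3 - ε))) ({c} + Icc 0 (3 - ε)) n) :=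
    isCompact_nsmulUnionRest isCompact_Icc
      (isCompact_singleton.add (isCompact_Icc.union isCompact_Icc))
      (isCompact_singleton.add isCompact_Icc) n
  have hD : volume (Icc 0 (n * δ) + Y) ≠ ⊤ :=
    ((Metric.isBounded_Icc _ _).add ((Metric.isBounded_Icc _ _).subset hY)).measure_lt_top.ne
  have hcD : volume ({c} + (Icc 0 (n * δ) + Y)) = volume (Icc 0 (n * δ) + Y) := by
    rw [singleton_add]
    exact measure_vadd volume c _
  rw [sumset_eq_nsmul, ← singleton_add, add_union,
    succ_nsmul_union_union (v := {c} + Icc 0 (3 - ε)) (fun k hk => by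
      rw [← add_union, nsmul_add, nsmul_add, nsmul_union_eq_nsmul_Icc hε hY hYne hk]) n,
    nsmul_Icc hδ, nsmul_zero, nsmul_eq_mul, add_left_comm,
    measureReal_union (disjoint_nsmulUnionRest hδ hnδ hc hY) hB.isClosed.measurableSet
      (hcD ▸ hD) hB.measure_lt_top.ne]
  simp only [measureReal_def, hcD]

theorem measure_difference_formula_general (H : ℕ) (hH : 2 ≤ H)
    (ε δ c : ℝ)
    (hδ0 : 0 < δ) (hδ : δ < ε / ((H : ℝ) - 1)) (hc : ((H : ℝ) - 1) * δ + 3 < c)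
    (X : Set ℝ) (hX : X = Set.Icc 0 (1 - ε) ∪ Set.Icc 2 (3 - ε))
    (n : ℕ) (Y : ℕ → Set ℝ)
    (hYsub : ∀ j, 1 ≤ j → j ≤ n → Y j ⊆ Set.Icc (1 + ε) (2 - 2 * ε))
    (hYne : ∀ j, 1 ≤ j → j ≤ n → (Y j).Nonempty)
    (A : ℕ → Set ℝ)
    (hA : ∀ j, 1 ≤ j → j ≤ n → A j = Set.Icc 0 δ ∪ ((c + ·) '' (X ∪ Y j))) :
    ∀ h, 1 ≤ h → h ≤ H → ∀ j, 1 ≤ j → j ≤ n → ∀ k, 1 ≤ k → k ≤ n →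
      (volume (sumset h (A j))).toReal - (volume (sumset h (A k))).toReal
        = (volume (Set.Icc (0 : ℝ) (((h : ℝ) - 1) * δ) + Y j)).toReal
          - (volume (Set.Icc (0 : ℝ) (((h : ℝ) - 1) * δ) + Y k)).toReal := by
  intro h h1 hhH j hj1 hjn k hk1 hkn
  obtain ⟨m, rfl⟩ := Nat.exists_eq_add_of_le' h1
  subst hX
  have hH1 : (1 : ℝ) ≤ H - 1 := by
    have : (2 : ℝ) ≤ H := by exact_mod_cast hH
    linarith
  have hHδ : ((H : ℝ) - 1) * δ < ε := by rwa [lt_div_iff₀ (by linarith), mul_comm] at hδ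
  have hmH : (m : ℝ) ≤ H - 1 := by
    have : ((m + 1 : ℕ) : ℝ) ≤ H := by exact_mod_cast hhH
    push_cast at this
    linarith
  have hmδ : (m + 1) * δ < 2 * ε := by
    have : (m : ℝ) * δ ≤ (H - 1) * δ := mul_le_mul_of_nonneg_right hmH hδ0.le
    have : δ ≤ (H - 1) * δ := le_mul_of_one_le_left hδ0.le hH1
    linarith
  have hc2 : 2 < c := by linarith [mul_nonneg (by linarith : (0 : ℝ) ≤ H - 1) hδ0.le]
  have hcast : ((m + 1 : ℕ) : ℝ) - 1 = m := by push_cast; ring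
  simp only [hcast, ← measureReal_def, hA j hj1 hjn, hA k hk1 hkn]
  rw [measureReal_sumset_eq_add hδ0.le hmδ hc2 (hYsub j hj1 hjn) (hYne j hj1 hjn),
    measureReal_sumset_eq_add hδ0.le hmδ hc2 (hYsub k hk1 hkn) (hYne k hk1 hkn)]
  ring

/-- Let `H ≥ 2` and let `ε, δ, c` be reals with `0 < ε < 1/3`, `0 < δ < ε/(H−1)`, and
`(H−1)δ + 3 < c`.  Let `X = [0, 1−ε] ∪ [2, 3−ε]`, and for each `j = 1,…,n` let `Y j` be
a nonempty Lebesgue-measurable subset of `[1+ε, 2−2ε]`.  Define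
`A j = [0, δ] ∪ (c + (X ∪ Y j))`.  Then for all `1 ≤ h ≤ H` and all `j, k ∈ {1,…,n}`,
`μ(h(A j)) − μ(h(A k)) = μ([0, (h−1)δ] + Y j) − μ([0, (h−1)δ] + Y k)`. -/
theorem measure_difference_formula (H : ℕ) (hH : 2 ≤ H)
    (ε δ c : ℝ) (hε0 : 0 < ε) (hε : ε < 1 / 3)
    (hδ0 : 0 < δ) (hδ : δ < ε / ((H : ℝ) - 1)) (hc : ((H : ℝ) - 1) * δ + 3 < c)
    (X : Set ℝ) (hX : X = Set.Icc 0 (1 - ε) ∪ Set.Icc 2 (3 - ε))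
    (n : ℕ) (hn : 1 ≤ n) (Y : ℕ → Set ℝ)
    (hYsub : ∀ j, 1 ≤ j → j ≤ n → Y j ⊆ Set.Icc (1 + ε) (2 - 2 * ε))
    (hYne : ∀ j, 1 ≤ j → j ≤ n → (Y j).Nonempty)
    (hYmeas : ∀ j, 1 ≤ j → j ≤ n → MeasurableSet (Y j))
    (A : ℕ → Set ℝ)
    (hA : ∀ j, 1 ≤ j → j ≤ n → A j = Set.Icc 0 δ ∪ ((c + ·) '' (X ∪ Y j))) :
    ∀ h, 1 ≤ h → h ≤ H → ∀ j, 1 ≤ j → j ≤ n → ∀ k, 1 ≤ k → k ≤ n →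
      (volume (sumset h (A j))).toReal - (volume (sumset h (A k))).toReal
        = (volume (Set.Icc (0 : ℝ) (((h : ℝ) - 1) * δ) + Y j)).toReal
          - (volume (Set.Icc (0 : ℝ) (((h : ℝ) - 1) * δ) + Y k)).toReal :=
  measure_difference_formula_general H hH ε δ c hδ0 hδ hc X hX n Y hYsub hYne A hA
end

section
/- Let H ≥ 2 be an integer, let ℓ_1, ℓ_2, …, ℓ_H be nonnegative integers, not all zero, and set L_H = ℓ_1 + ⋯ + ℓ_H. Let ε and δ be real numbers with 0 < ε < 1/3 and 0 < δ ≤ (1 − 3ε)/(2H·L_H). Then the closed interval [1+ε, 2−2ε] contains a set Z that is the union of L_H pairwise disjoint open intervals such that the nonempty set Y = [1+ε, 2−2ε] \ Z satisfies μ([0, (h−1)δ] + Y) = (h−1)δ + 1 − 3ε − δ·Σ_{r=h}^{H} (r−h+1)·ℓ_r for all h = 1,…,H. -/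
/-!
Take `Y` to be `[1 + ε, 2 - 2ε]` with `L` consecutive open gaps removed, `ℓ r` of them of length
`r δ`. Every left endpoint `a` of a gap `(a, b)` lies in `Y`, so adding `[0, t]` fills the gap up
to `a + t` and extends the right end by `t`: the set `[0, t] + Y` is `[1 + ε, 2 - 2ε + t]` with
the gaps `(a + t, b)` removed. A gap of length `r δ` thus still costs `max (r δ - t) 0`, and for
`t = (h - 1) δ` these costs add up to `δ Σ_{r ≥ h} (r - h + 1) ℓ r`. The gaps fit because their
total length is at most `δ H L ≤ (1 - 3ε) / 2`.
-/

open MeasureTheory Pointwise Set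

section Gaps

variable {ι : Type*} (s : Finset ι) (a b : ι → ℝ) {p q : ℝ}

theorem Icc_add_Icc_diff_biUnion_Ioo {t : ℝ} (ht : 0 ≤ t) (hpq : p ≤ q)
    (ha : ∀ j ∈ s, a j ∈ Icc p q \ ⋃ k ∈ s, Ioo (a k) (b k)) (hb : ∀ j ∈ s, b j ≤ q) :
    Icc 0 t + (Icc p q \ ⋃ j ∈ s, Ioo (a j) (b j)) =
      Icc p (q + t) \ ⋃ j ∈ s, Ioo (a j + t) (b j) := by
  ext x
  constructor
  · rintro ⟨u, ⟨hu0, hut⟩, y, ⟨⟨hpy, hyq⟩, hy⟩, rfl⟩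
    simp only [mem_iUnion, mem_Ioo, not_exists] at hy
    refine ⟨⟨by linarith, by linarith⟩, ?_⟩
    simp only [mem_iUnion, mem_Ioo, not_exists]
    exact fun j hj ⟨h1, h2⟩ => hy j hj ⟨by linarith, by linarith⟩
  · rintro ⟨⟨hpx, hxq⟩, hx⟩
    simp only [mem_iUnion, mem_Ioo, not_exists] at hx
    by_cases hqx : q < x
    · have hq : q ∈ Icc p q \ ⋃ k ∈ s, Ioo (a k) (b k) := by
        simp only [mem_sdiff, mem_iUnion, mem_Ioo, not_exists]
        exact ⟨⟨hpq, le_rfl⟩, fun k hk h => (hb k hk).not_gt h.2⟩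
      exact ⟨x - q, ⟨by linarith, by linarith⟩, q, hq, by ring⟩
    by_cases hgap : x ∈ ⋃ j ∈ s, Ioo (a j) (b j)
    · obtain ⟨j, hj, haj, hbj⟩ := mem_iUnion₂.1 hgap
      have hxa : x ≤ a j + t := not_lt.1 fun h => hx j hj ⟨h, hbj⟩
      exact ⟨x - a j, ⟨by linarith, by linarith⟩, a j, ha j hj, by ring⟩
    · exact ⟨0, ⟨le_rfl, ht⟩, x, ⟨⟨hpx, not_lt.1 hqx⟩, hgap⟩, zero_add x⟩

theorem volume_Icc_diff_biUnion_Ioo_toReal (hpq : p ≤ q)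
    (hsub : ∀ j ∈ s, Ioo (a j) (b j) ⊆ Icc p q)
    (hdisj : (s : Set ι).PairwiseDisjoint fun j => Ioo (a j) (b j)) :
    (volume (Icc p q \ ⋃ j ∈ s, Ioo (a j) (b j))).toReal
      = q - p - ∑ j ∈ s, max (b j - a j) 0 := by
  have hU : ⋃ j ∈ s, Ioo (a j) (b j) ⊆ Icc p q := iUnion₂_subset hsub
  have hvol : volume (⋃ j ∈ s, Ioo (a j) (b j)) = ∑ j ∈ s, volume (Ioo (a j) (b j)) :=
    measure_biUnion_finset hdisj fun _ _ => measurableSet_Ioo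
  rw [measure_sdiff hU (s.measurableSet_biUnion fun _ _ => measurableSet_Ioo).nullMeasurableSet
      (measure_ne_top_of_subset hU (by simp)),
    ENNReal.toReal_sub_of_le (measure_mono hU) (by simp), hvol,
    ENNReal.toReal_sum fun _ _ => by simp]
  simp [Real.volume_Icc, hpq, ENNReal.toReal_ofReal']

end Gaps

section MonotoneGaps

variable {x : ℕ → ℝ}

theorem Monotone.notMem_Ioo_succ (hx : Monotone x) (j k : ℕ) : x j ∉ Ioo (x k) (x (k + 1)) := by
  rintro ⟨hk, hk1⟩
  rcases le_or_gt j k with hjk | hkj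
  · exact (hx hjk).not_gt hk
  · exact (hx hkj).not_gt hk1

theorem Monotone.volume_Icc_add_Icc_diff_biUnion_Ioo_succ (hx : Monotone x) (s : Finset ℕ)
    {p q t : ℝ} (hpq : p ≤ q) (ht : 0 ≤ t) (hp : ∀ j ∈ s, p ≤ x j) (hq : ∀ j ∈ s, x (j + 1) ≤ q) :
    (volume (Icc 0 t + (Icc p q \ ⋃ j ∈ s, Ioo (x j) (x (j + 1))))).toReal
      = q + t - p - ∑ j ∈ s, max (x (j + 1) - x j - t) 0 := by
  have hY : ∀ j ∈ s, x j ∈ Icc p q \ ⋃ k ∈ s, Ioo (x k) (x (k + 1)) := fun j hj =>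
    ⟨⟨hp j hj, (hx j.le_succ).trans (hq j hj)⟩,
      fun h => by obtain ⟨k, -, hk⟩ := mem_iUnion₂.1 h; exact hx.notMem_Ioo_succ j k hk⟩
  have hsub : ∀ j ∈ s, Ioo (x j + t) (x (j + 1)) ⊆ Icc p (q + t) := fun j hj y hy =>
    ⟨by linarith [hp j hj, hy.1], by linarith [hq j hj, hy.2]⟩
  have hdisj : (s : Set ℕ).PairwiseDisjoint fun j => Ioo (x j + t) (x (j + 1)) :=
    PairwiseDisjoint.mono (hx.pairwise_disjoint_on_Ioo_succ.set_pairwise _) fun j =>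
      Ioo_subset_Ioo_left (le_add_of_nonneg_right ht)
  rw [Icc_add_Icc_diff_biUnion_Ioo s x (fun j => x (j + 1)) ht hpq hY hq,
    volume_Icc_diff_biUnion_Ioo_toReal s _ _ (by linarith) hsub hdisj]
  simp only [sub_add_eq_sub_sub]

end MonotoneGaps

theorem List.sum_Icc_map_getD {α M : Type*} [AddCommMonoid M] (l : List α) (f : α → M)
    (d : α) :
    ∑ j ∈ Finset.Icc 1 l.length, f (l.getD (j - 1) d) = (l.map f).sum := by
  simp_rw [← Fin.sum_univ_fun_getElem, List.getElem_eq_getD d]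
  rw [Fin.sum_univ_eq_sum_range (fun i => f (l.getD i d)), ← Finset.Ico_add_one_right_eq_Icc,
    Finset.sum_Ico_eq_sum_range]
  simp [add_comm 1]

noncomputable def listWithMult (ℓ : ℕ → ℕ) (H : ℕ) (j : ℕ) : ℕ :=
  (∑ r ∈ Finset.Icc 1 H, Multiset.replicate (ℓ r) r).toList.getD (j - 1) 0

section ListWithMult

variable (ℓ : ℕ → ℕ) (H : ℕ)

theorem length_toList_sum_replicate :
    (∑ r ∈ Finset.Icc 1 H, Multiset.replicate (ℓ r) r).toList.length =
      ∑ r ∈ Finset.Icc 1 H, ℓ r := by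
  simp [Multiset.card_sum]

theorem sum_listWithMult {M : Type*} [AddCommMonoid M] (f : ℕ → M) :
    ∑ j ∈ Finset.Icc 1 (∑ r ∈ Finset.Icc 1 H, ℓ r), f (listWithMult ℓ H j)
      = ∑ r ∈ Finset.Icc 1 H, ℓ r • f r := by
  unfold listWithMult
  rw [← length_toList_sum_replicate, List.sum_Icc_map_getD, ← Multiset.sum_coe,
    ← Multiset.map_coe, Multiset.coe_toList, ← Multiset.coe_mapAddMonoidHom, map_sum,
    ← Multiset.coe_sumAddMonoidHom, map_sum]
  simp

theorem listWithMult_mem_Icc {j : ℕ} (hj : j ∈ Finset.Icc 1 (∑ r ∈ Finset.Icc 1 H, ℓ r)) :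
    listWithMult ℓ H j ∈ Finset.Icc 1 H := by
  rw [← length_toList_sum_replicate, Finset.mem_Icc] at hj
  unfold listWithMult
  have hlt : j - 1 < (∑ r ∈ Finset.Icc 1 H, Multiset.replicate (ℓ r) r).toList.length := by
    omega
  rw [List.getD_eq_getElem _ _ hlt]
  have hmem := List.getElem_mem hlt
  rw [Multiset.mem_toList, Multiset.mem_sum] at hmem
  obtain ⟨r, hr, hmem⟩ := hmem
  rwa [Multiset.eq_of_mem_replicate hmem]

end ListWithMult

theorem sum_Icc_mul_max_sub_mul (w : ℕ → ℝ) {δ : ℝ} (hδ : 0 ≤ δ) {h : ℕ} (hh : 1 ≤ h)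
    (H : ℕ) :
    ∑ r ∈ Finset.Icc 1 H, w r * max (δ * r - ((h : ℝ) - 1) * δ) 0
      = δ * ∑ r ∈ Finset.Icc h H, ((r : ℝ) - h + 1) * w r := by
  have hfilter : (Finset.Icc 1 H).filter (h ≤ ·) = Finset.Icc h H := by
    ext r
    simp only [Finset.mem_filter, Finset.mem_Icc]
    omega
  rw [← hfilter, Finset.sum_filter, Finset.mul_sum]
  refine Finset.sum_congr rfl fun r _ => ?_
  split_ifs with hhr
  · have : (h : ℝ) ≤ r := by exact_mod_cast hhr
    rw [max_eq_left (by nlinarith)]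
    ring
  · have : (r : ℝ) + 1 ≤ h := by exact_mod_cast Nat.lt_of_not_le hhr
    rw [max_eq_right (by nlinarith), mul_zero, mul_zero]

def gapEndpoint (p δ : ℝ) (g : ℕ → ℕ) (j : ℕ) : ℝ :=
  p + δ * ∑ i ∈ Finset.Ico 1 j, (g i : ℝ)

section GapEndpoint

variable {p δ : ℝ} {g : ℕ → ℕ}

theorem monotone_gapEndpoint (hδ : 0 ≤ δ) : Monotone (gapEndpoint p δ g) := fun i j hij => by
  unfold gapEndpoint
  gcongr

theorem le_gapEndpoint (hδ : 0 ≤ δ) (j : ℕ) : p ≤ gapEndpoint p δ g j :=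
  le_add_of_nonneg_right (by positivity)

theorem gapEndpoint_succ_sub {j : ℕ} (hj : 1 ≤ j) :
    gapEndpoint p δ g (j + 1) - gapEndpoint p δ g j = δ * g j := by
  simp only [gapEndpoint, Finset.sum_Ico_succ_top hj]
  ring

theorem gapEndpoint_le {L H : ℕ} (hδ : 0 ≤ δ) (hg : ∀ j ∈ Finset.Icc 1 L, g j ≤ H) :
    gapEndpoint p δ g (L + 1) ≤ p + δ * (L * H) := by
  have hsum := Finset.sum_le_card_nsmul _ (fun i => (g i : ℝ)) H fun j hj => by
    exact_mod_cast hg j hj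
  rw [Nat.card_Icc, add_tsub_cancel_right, nsmul_eq_mul] at hsum
  rw [gapEndpoint, Finset.Ico_add_one_right_eq_Icc]
  gcongr

end GapEndpoint

theorem interval_minus_intervals_general (H : ℕ)
    (ℓ : ℕ → ℕ) (L : ℕ) (hL : L = ∑ j ∈ Finset.Icc 1 H, ℓ j)
    (ε δ : ℝ)
    (hδ0 : 0 < δ) (hδ : δ ≤ (1 - 3 * ε) / (2 * (H : ℝ) * (L : ℝ))) :
    ∃ (Z : Set ℝ) (a b : ℕ → ℝ),
      Z ⊆ Set.Icc (1 + ε) (2 - 2 * ε) ∧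
      Z = ⋃ j ∈ Finset.Icc 1 L, Set.Ioo (a j) (b j) ∧
      (∀ j, 1 ≤ j → j ≤ L → a j < b j) ∧
      (∀ j, 1 ≤ j → j ≤ L → ∀ k, 1 ≤ k → k ≤ L → j ≠ k →
        Disjoint (Set.Ioo (a j) (b j)) (Set.Ioo (a k) (b k))) ∧
      (Set.Icc (1 + ε) (2 - 2 * ε) \ Z).Nonempty ∧
      (∀ h, 1 ≤ h → h ≤ H →
        (volume (Set.Icc (0 : ℝ) (((h : ℝ) - 1) * δ)
            + (Set.Icc (1 + ε) (2 - 2 * ε) \ Z))).toReal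
          = ((h : ℝ) - 1) * δ + 1 - 3 * ε
            - δ * ∑ r ∈ Finset.Icc h H, ((r : ℝ) - (h : ℝ) + 1) * (ℓ r : ℝ)) := by
  -- Division by `0` is `0` in Lean, so `0 < δ` and `hδ` force `0 < 2 H L`.
  have hHL : 0 < 2 * (H : ℝ) * L := by
    refine (by positivity : (0 : ℝ) ≤ 2 * H * L).lt_of_ne fun h0 => ?_
    rw [← h0, div_zero] at hδ
    linarith
  have hδHL : δ * (2 * H * L) ≤ 1 - 3 * ε := (le_div_iff₀ hHL).1 hδ
  have hε : 0 < 1 - 3 * ε := (mul_pos hδ0 hHL).trans_le hδHL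
  set g := listWithMult ℓ H
  have hg : ∀ j ∈ Finset.Icc 1 L, g j ∈ Finset.Icc 1 H := fun j hj =>
    listWithMult_mem_Icc ℓ H (hL ▸ hj)
  set x := gapEndpoint (1 + ε) δ g
  have hx : Monotone x := monotone_gapEndpoint hδ0.le
  have hp : ∀ j, 1 + ε ≤ x j := le_gapEndpoint hδ0.le
  have hq : x (L + 1) ≤ 2 - 2 * ε := by
    have := gapEndpoint_le (p := 1 + ε) hδ0.le fun j hj => (Finset.mem_Icc.1 (hg j hj)).2
    nlinarith
  have hq' : ∀ j ∈ Finset.Icc 1 L, x (j + 1) ≤ 2 - 2 * ε := fun j hj =>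
    (hx (by simpa using (Finset.mem_Icc.1 hj).2)).trans hq
  refine ⟨_, x, fun j => x (j + 1),
    iUnion₂_subset fun j hj => Ioo_subset_Icc_self.trans (Icc_subset_Icc (hp j) (hq' j hj)),
    rfl, fun j hj hjL => ?_, fun j _ _ k _ _ hjk => hx.pairwise_disjoint_on_Ioo_succ hjk,
    ⟨1 + ε, ⟨le_rfl, by linarith⟩, fun h => ?_⟩, fun h hh _ => ?_⟩
  · have hgj : (1 : ℝ) ≤ g j := by
      exact_mod_cast (Finset.mem_Icc.1 (hg j (Finset.mem_Icc.2 ⟨hj, hjL⟩))).1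
    nlinarith [gapEndpoint_succ_sub (p := 1 + ε) (δ := δ) (g := g) hj]
  · obtain ⟨j, -, hj, -⟩ := mem_iUnion₂.1 h
    exact (hp j).not_gt hj
  · have ht : 0 ≤ ((h : ℝ) - 1) * δ := mul_nonneg (by simpa using hh) hδ0.le
    rw [hx.volume_Icc_add_Icc_diff_biUnion_Ioo_succ _ (by linarith) ht (fun j _ => hp j) hq',
      Finset.sum_congr rfl fun j hj => by rw [gapEndpoint_succ_sub (Finset.mem_Icc.1 hj).1], hL,
      sum_listWithMult ℓ H fun r => max (δ * r - ((h : ℝ) - 1) * δ) 0]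
    simp only [nsmul_eq_mul]
    rw [sum_Icc_mul_max_sub_mul _ hδ0.le hh]
    ring

/-- Let `H ≥ 2`, let `ℓ 1, …, ℓ H` be nonnegative integers, not all zero, with
`L = ℓ 1 + ⋯ + ℓ H`, and let `0 < ε < 1/3` and `0 < δ ≤ (1 − 3ε)/(2H·L)`.  Then the
closed interval `[1+ε, 2−2ε]` contains a set `Z` that is the union of `L` pairwise
disjoint (nonempty) open intervals such that the nonempty set
`Y = [1+ε, 2−2ε] \ Z` satisfies
`μ([0, (h−1)δ] + Y) = (h−1)δ + 1 − 3ε − δ·Σ_{r=h}^{H} (r−h+1)·ℓ r`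
for all `h = 1,…,H`. -/
theorem interval_minus_intervals (H : ℕ) (hH : 2 ≤ H)
    (ℓ : ℕ → ℕ) (L : ℕ) (hL : L = ∑ j ∈ Finset.Icc 1 H, ℓ j) (hLpos : 0 < L)
    (ε δ : ℝ) (hε0 : 0 < ε) (hε : ε < 1 / 3)
    (hδ0 : 0 < δ) (hδ : δ ≤ (1 - 3 * ε) / (2 * (H : ℝ) * (L : ℝ))) :
    ∃ (Z : Set ℝ) (a b : ℕ → ℝ),
      Z ⊆ Set.Icc (1 + ε) (2 - 2 * ε) ∧
      Z = ⋃ j ∈ Finset.Icc 1 L, Set.Ioo (a j) (b j) ∧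
      (∀ j, 1 ≤ j → j ≤ L → a j < b j) ∧
      (∀ j, 1 ≤ j → j ≤ L → ∀ k, 1 ≤ k → k ≤ L → j ≠ k →
        Disjoint (Set.Ioo (a j) (b j)) (Set.Ioo (a k) (b k))) ∧
      (Set.Icc (1 + ε) (2 - 2 * ε) \ Z).Nonempty ∧
      (∀ h, 1 ≤ h → h ≤ H →
        (volume (Set.Icc (0 : ℝ) (((h : ℝ) - 1) * δ)
            + (Set.Icc (1 + ε) (2 - 2 * ε) \ Z))).toReal
          = ((h : ℝ) - 1) * δ + 1 - 3 * ε
            - δ * ∑ r ∈ Finset.Icc h H, ((r : ℝ) - (h : ℝ) + 1) * (ℓ r : ℝ)) :=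
  interval_minus_intervals_general H ℓ L hL ε δ hδ0 hδ
end
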